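/- arXiv:2605.19863 — 11 statements merged into one kernel-verified Lean document; each statement's English description precedes it below -/
import Mathlib

section
/- Let A be a C*-algebra and let I, J, K be closed two-sided ideals of A. Then the norm closure of (I ∩ J) + K equals the intersection of the norm closure of I + K with the norm closure of J + K; in other words, in the lattice of closed two-sided ideals of A (with infimum the intersection and supremum the closure of the sum) one has (I ⊓ J) ⊔ K = (I ⊔ K) ⊓ (J ⊔ K). -/
open scoped Pointwise

open Unitization in
lemma cstar_key_approx {A : Type*} [NonUnitalCStarAlgebra A] (x : A) {ε : ℝ} (hε : 0 < ε) :
    ∃ c : A, ‖x - x * (star x * x * c)‖ < ε := by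
  set a : A := star x * x with ha_def
  obtain ⟨r, hr0, hr⟩ : ∃ r : ℝ, 0 < r ∧ 1 / Real.sqrt r < ε ^ 2 := by
    refine ⟨(2 / ε ^ 2) ^ 2, by positivity, ?_⟩
    rw [Real.sqrt_sq (by positivity), div_lt_iff₀ (by positivity)]
    have h2 : ε ^ 2 * (2 / ε ^ 2) = 2 := by field_simp
    rw [h2]; norm_num
  set g : ℝ → ℝ := fun t => r * t / (r * t ^ 2 + 1) with hg_def
  have hcont : ∀ t : ℝ, r * t ^ 2 + 1 ≠ 0 := fun t => by positivity
  have hg : Continuous g := by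
    apply Continuous.div (by fun_prop) (by fun_prop) hcont
  refine ⟨cfcₙ g a, ?_⟩
  set f : ℝ → ℝ := fun t => t * g t with hf_def
  have hf : Continuous f := by fun_prop
  have hf0 : f 0 = 0 := by simp [hf_def, hg_def]
  have hmul := cfcₙ_mul (id : ℝ → ℝ) g a (by fun_prop) (by simp) hg.continuousOn
    (by simp [hg_def])
  rw [cfcₙ_id ℝ a] at hmul
  have hac : star x * x * cfcₙ g a = cfcₙ f a := by
    rw [← ha_def, ← hmul]; rfl
  rw [hac]
  -- pass to the unitization
  have hxa : ((a : A) : Unitization ℂ A) = star (x : Unitization ℂ A) * (x : Unitization ℂ A) := by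
    simp [ha_def]
  rw [← norm_inr (𝕜 := ℂ), Unitization.inr_sub ℂ, Unitization.inr_mul,
    Unitization.real_cfcₙ_eq_cfc_inr a f hf0]
  set X : Unitization ℂ A := (x : Unitization ℂ A)
  set a' : Unitization ℂ A := ((a : A) : Unitization ℂ A)
  have ha' : IsSelfAdjoint a' := by
    rw [hxa]; exact IsSelfAdjoint.star_mul_self X
  set k : ℝ → ℝ := fun t => 1 - f t with hk_def
  have hk : Continuous k := by fun_prop
  have hD : (1 : Unitization ℂ A) - cfc f a' = cfc k a' := by
    rw [hk_def,
      cfc_sub (fun _ : ℝ => (1 : ℝ)) f a' (by fun_prop) hf.continuousOn, cfc_const_one ℝ a']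
  have hDsa : IsSelfAdjoint (cfc k a') := cfc_predicate k a'
  have key : X - X * cfc f a' = X * cfc k a' := by
    rw [← hD, mul_sub, mul_one]
  rw [key]
  have hsq : ‖X * cfc k a'‖ * ‖X * cfc k a'‖ = ‖cfc (fun t => k t * t * k t) a'‖ := by
    rw [← CStarRing.norm_star_mul_self]
    congr 1
    rw [star_mul, hDsa.star_eq, mul_assoc, ← mul_assoc (star X), ← hxa]
    nth_rewrite 2 [← cfc_id ℝ a' ha']
    rw [← mul_assoc, ← cfc_mul k id a' hk.continuousOn (by fun_prop),
      ← cfc_mul _ k a' (by fun_prop) hk.continuousOn]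
    exact cfc_congr fun t _ => by simp
  have hbound : ‖cfc (fun t => k t * t * k t) a'‖ ≤ 1 / Real.sqrt r := by
    apply norm_cfc_le (by positivity)
    intro t _
    have hd : (1 : ℝ) ≤ r * t ^ 2 + 1 := by nlinarith [sq_nonneg t]
    have hd0 : (0 : ℝ) < r * t ^ 2 + 1 := by positivity
    have hkt : k t = 1 / (r * t ^ 2 + 1) := by
      show 1 - t * (r * t / (r * t ^ 2 + 1)) = _
      rw [eq_div_iff hd0.ne', sub_mul, one_mul, mul_assoc, div_mul_cancel₀ _ hd0.ne']
      ring
    have hs : Real.sqrt r > 0 := Real.sqrt_pos.mpr hr0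
    have hs2 : Real.sqrt r ^ 2 = r := Real.sq_sqrt hr0.le
    have hv : 1 / (r * t ^ 2 + 1) * t * (1 / (r * t ^ 2 + 1)) = t / (r * t ^ 2 + 1) ^ 2 := by
      rw [div_mul_eq_mul_div, div_mul_div_comm, mul_one, one_mul, ← sq]
    rw [hkt, hv, Real.norm_eq_abs, abs_div, abs_pow, sq_abs]
    rw [div_le_div_iff₀ (by positivity) hs]
    nlinarith [sq_nonneg (Real.sqrt r * |t| - 1), sq_abs t, abs_nonneg t,
      sq_nonneg (r * t ^ 2), sq_nonneg t, hs2, hs.le]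
  have : ‖X * cfc k a'‖ ^ 2 < ε ^ 2 := by
    rw [sq]
    calc ‖X * cfc k a'‖ * ‖X * cfc k a'‖ = ‖cfc (fun t => k t * t * k t) a'‖ := hsq
    _ ≤ 1 / Real.sqrt r := hbound
    _ < ε ^ 2 := hr
  exact lt_of_pow_lt_pow_left₀ 2 hε.le this


/-- In a (non-unital) C*-algebra `A`, for closed two-sided ideals
`I, J, K` one has `cl((I ∩ J) + K) = cl(I + K) ∩ cl(J + K)`; i.e. the lattice of closed
two-sided ideals (with meet the intersection and join the closure of the sum) satisfies
`(I ⊓ J) ⊔ K = (I ⊔ K) ⊓ (J ⊔ K)`. -/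
theorem closure_inter_add_eq_closure_add_inter_closure_add
    {A : Type*} [NonUnitalCStarAlgebra A]
    (I J K : TwoSidedIdeal A)
    (hI : IsClosed (I : Set A)) (hJ : IsClosed (J : Set A)) (hK : IsClosed (K : Set A)) :
    closure (((I : Set A) ∩ (J : Set A)) + (K : Set A)) =
      closure ((I : Set A) + (K : Set A)) ∩ closure ((J : Set A) + (K : Set A)) := by
  apply Set.Subset.antisymm
  · exact Set.subset_inter
      (closure_mono (Set.add_subset_add Set.inter_subset_left Set.Subset.rfl))
      (closure_mono (Set.add_subset_add Set.inter_subset_right Set.Subset.rfl))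
  rintro x ⟨hx1, hx2⟩
  set S : Set A := ((I : Set A) ∩ (J : Set A)) + (K : Set A) with hS
  rw [show closure S = closure (closure S) from (closure_closure).symm, Metric.mem_closure_iff]
  intro ε hε
  obtain ⟨c, hc⟩ := cstar_key_approx x hε
  refine ⟨x * (star x * x * c), ?_, by rwa [dist_eq_norm]⟩
  -- step 1 : `x * star x * x ∈ closure S`
  have hv : x * star x * x ∈ closure S := by
    have hmem : (x, x) ∈ closure (((I : Set A) + K) ×ˢ ((J : Set A) + K)) := by
      rw [closure_prod_eq]; exact ⟨hx1, hx2⟩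
    have hcont : Continuous (fun p : A × A => p.1 * star x * p.2) := by fun_prop
    have h1 := image_closure_subset_closure_image (s := ((I : Set A) + K) ×ˢ ((J : Set A) + K))
      hcont (Set.mem_image_of_mem _ hmem)
    refine closure_mono ?_ h1
    rintro _ ⟨⟨p, q⟩, ⟨hp, hq⟩, rfl⟩
    obtain ⟨i, hi, k1, hk1, rfl⟩ := Set.mem_add.mp hp
    obtain ⟨j, hj, k2, hk2, rfl⟩ := Set.mem_add.mp hq
    simp only
    have hexp : (i + k1) * star x * (j + k2)
        = i * star x * j + (i * star x * k2 + k1 * star x * (j + k2)) := by noncomm_ring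
    rw [hexp]
    refine Set.add_mem_add ⟨?_, ?_⟩ (K.add_mem ?_ ?_)
    · exact I.mul_mem_right _ _ (I.mul_mem_right _ _ hi)
    · exact J.mul_mem_left _ _ hj
    · exact K.mul_mem_left _ _ hk2
    · exact K.mul_mem_right _ _ (K.mul_mem_right _ _ hk1)
  -- step 2 : multiply by `c` on the right
  have hw : x * (star x * x * c) = (x * star x * x) * c := by noncomm_ring
  rw [hw]
  have h2 := image_closure_subset_closure_image (s := S) (continuous_mul_right c)
    (Set.mem_image_of_mem _ hv)
  refine closure_mono ?_ h2
  rintro _ ⟨z, hz, rfl⟩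
  obtain ⟨s, hs, k, hk, rfl⟩ := Set.mem_add.mp hz
  simp only
  rw [add_mul]
  exact Set.add_mem_add ⟨I.mul_mem_right _ _ hs.1, J.mul_mem_right _ _ hs.2⟩
    (K.mul_mem_right _ _ hk)
end

section
/- Let A be a C*-algebra and let I, J, K be closed two-sided ideals of A. For all a ∈ I and b ∈ J with a − b ∈ K there exists c ∈ I ∩ J with a − c ∈ K. Equivalently, the image of I ∩ J under the quotient map A → A/K equals the intersection of the images of I and J; that is, (I ∩ J)/(K ∩ I ∩ J) = I/(K ∩ I) ∩ J/(K ∩ J) inside A/K. -/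
noncomputable section CStarAux

private lemma bern_aux (m : ℕ) {s : ℝ} (h0 : 0 ≤ s) (h1 : s ≤ 1) :
    (1 + m * s) * (1 - s) ^ m ≤ 1 := by
  induction m with
  | zero => simp
  | succ k ih =>
    have hp : (0:ℝ) ≤ (1 - s) ^ k := pow_nonneg (by linarith) k
    have hk : (0:ℝ) ≤ (k:ℝ) := Nat.cast_nonneg k
    have h2 : ((1 + (k+1 : ℝ) * s) * (1 - s)) ≤ 1 + (k:ℝ) * s := by
      nlinarith [mul_nonneg hk (sq_nonneg s), sq_nonneg s]
    calc (1 + (↑(k+1)) * s) * (1 - s) ^ (k+1)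
        = ((1 + (k+1 : ℝ) * s) * (1 - s)) * (1 - s) ^ k := by push_cast; ring
      _ ≤ (1 + (k:ℝ) * s) * (1 - s) ^ k := mul_le_mul_of_nonneg_right h2 hp
      _ ≤ 1 := ih

private lemma sbound_aux (m : ℕ) (hm : 1 ≤ m) {s : ℝ} (h0 : 0 ≤ s) (h1 : s ≤ 1) :
    s * (1 - s) ^ m ≤ 1 / m := by
  have hb := bern_aux m h0 h1
  have hp : (0:ℝ) ≤ (1 - s) ^ m := pow_nonneg (by linarith) m
  have hm' : (0:ℝ) < m := by exact_mod_cast hm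
  rw [le_div_iff₀ hm']
  nlinarith

variable {A : Type*} [NonUnitalCStarAlgebra A]

private def eSeq (M : ℝ) (h : A) : ℕ → A
  | 0 => 0
  | k+1 => M⁻¹ • h + eSeq M h k - M⁻¹ • (h * eSeq M h k)

private lemma eSeq_mem (M : ℝ) (x : A) (T : TwoSidedIdeal A) (hx : x ∈ T) :
    ∀ n, eSeq M (star x * x) n ∈ T := by
  intro n
  induction n with
  | zero => exact T.zero_mem
  | succ k ih =>
    have h1 : M⁻¹ • (star x * x) ∈ T := by
      rw [← smul_mul_assoc]; exact T.mul_mem_left _ _ hx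
    have h2 : M⁻¹ • ((star x * x) * eSeq M (star x * x) k) ∈ T := by
      rw [← smul_mul_assoc]; exact T.mul_mem_left _ _ ih
    exact sub_mem (add_mem h1 ih) h2

local instance : PartialOrder (Unitization ℂ A) := CStarAlgebra.spectralOrder _
local instance : StarOrderedRing (Unitization ℂ A) := CStarAlgebra.spectralOrderedRing _

private lemma exists_approx (x : A) {ε : ℝ} (hε : 0 < ε) :
    ∃ e : A, (∀ T : TwoSidedIdeal A, x ∈ T → e ∈ T) ∧ ‖x - x * e‖ ≤ ε ∧
      ∀ z : A, ‖z - z * e‖ ≤ ‖z‖ := by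
  set h : A := star x * x with hh
  set M : ℝ := ‖h‖ + 1 with hMdef
  clear_value h
  have hM : 0 < M := by rw [hMdef]; positivity
  have hMn : ‖h‖ ≤ M - 1 := by simp [hMdef]
  clear_value M
  set H : Unitization ℂ A := ((h : A) : Unitization ℂ A) with hHdef
  have hHeq : H = star ((x : A) : Unitization ℂ A) * ((x : A) : Unitization ℂ A) := by
    rw [hHdef, hh, Unitization.inr_mul, Unitization.inr_star]
  have hH0 : (0 : Unitization ℂ A) ≤ H := hHeq ▸ star_mul_self_nonneg _
  have hHsa : IsSelfAdjoint H := .of_nonneg hH0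
  have hHnorm : ‖H‖ = ‖h‖ := Unitization.norm_inr _
  clear_value H
  set W : Unitization ℂ A := 1 - (M⁻¹ : ℝ) • H with hWdef
  clear_value W
  have hsmul0 : (0 : Unitization ℂ A) ≤ (M⁻¹ : ℝ) • H := by
    have : (M⁻¹ : ℝ) • H
        = star (Real.sqrt M⁻¹ • ((x : A) : Unitization ℂ A))
          * (Real.sqrt M⁻¹ • ((x : A) : Unitization ℂ A)) := by
      rw [star_smul, star_trivial, smul_mul_assoc, mul_smul_comm, smul_smul,
        Real.mul_self_sqrt (by positivity), hHeq]
    rw [this]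
    exact star_mul_self_nonneg _
  have hW0 : (0 : Unitization ℂ A) ≤ W := by
    rw [hWdef, sub_nonneg]
    apply (CStarAlgebra.norm_le_one_iff_of_nonneg _ hsmul0).mp
    rw [norm_smul, hHnorm]
    calc ‖(M⁻¹:ℝ)‖ * ‖h‖ = M⁻¹ * ‖h‖ := by
          rw [Real.norm_eq_abs, abs_of_nonneg (by positivity)]
      _ ≤ M⁻¹ * M := mul_le_mul_of_nonneg_left (by linarith) (by positivity)
      _ = 1 := inv_mul_cancel₀ hM.ne'
  have hW1 : W ≤ 1 := by rw [hWdef]; exact sub_le_self _ hsmul0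
  have hWsa : IsSelfAdjoint W := .of_nonneg hW0
  have hWn : ∀ n : ℕ, ‖W ^ n‖ ≤ 1 := fun n => by
    rw [CStarAlgebra.norm_le_one_iff_of_nonneg _ (CStarAlgebra.pow_nonneg hW0 n)]
    simpa using CStarAlgebra.pow_antitone hW0 hW1 (Nat.zero_le n)
  -- the identity (eSeq n : B) = 1 - W ^ n
  have hinr : ∀ n : ℕ, ((eSeq M h n : A) : Unitization ℂ A) = 1 - W ^ n := by
    intro n
    induction n with
    | zero => simp [eSeq]
    | succ k ih =>
      have expand : ((eSeq M h (k+1) : A) : Unitization ℂ A)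
          = (M⁻¹:ℝ) • H + ((eSeq M h k : A) : Unitization ℂ A)
            - (M⁻¹:ℝ) • (H * ((eSeq M h k : A) : Unitization ℂ A)) := by
        simp only [eSeq, Unitization.inr_sub, Unitization.inr_add, Unitization.inr_smul,
          Unitization.inr_mul, hHdef]
      rw [expand, ih]
      have hpow : W ^ (k+1) = W ^ k - (M⁻¹:ℝ) • (H * W ^ k) := by
        rw [pow_succ', hWdef, sub_mul, one_mul, smul_mul_assoc]
      rw [hpow, mul_sub, mul_one, smul_sub]
      abel
  -- norm estimates
  have hcontr : ∀ n : ℕ, ∀ z : A, ‖z - z * eSeq M h n‖ ≤ ‖z‖ := by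
    intro n z
    have : ((z - z * eSeq M h n : A) : Unitization ℂ A)
        = (z : Unitization ℂ A) * W ^ n := by
      rw [Unitization.inr_sub, Unitization.inr_mul, hinr, mul_sub, mul_one, sub_sub_cancel]
    calc ‖z - z * eSeq M h n‖ = ‖((z - z * eSeq M h n : A) : Unitization ℂ A)‖ :=
          (Unitization.norm_inr _).symm
      _ = ‖(z : Unitization ℂ A) * W ^ n‖ := by rw [this]
      _ ≤ ‖(z : Unitization ℂ A)‖ * ‖W ^ n‖ := norm_mul_le _ _
      _ ≤ ‖z‖ * 1 := by
          rw [Unitization.norm_inr]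
          exact mul_le_mul_of_nonneg_left (hWn n) (norm_nonneg _)
      _ = ‖z‖ := mul_one _
  -- quantitative estimate for x itself
  have hxest : ∀ n : ℕ, 1 ≤ n → ‖x - x * eSeq M h n‖ ^ 2 ≤ M / (2 * n) := by
    intro n hn
    have hxi : ((x - x * eSeq M h n : A) : Unitization ℂ A)
        = (x : Unitization ℂ A) * W ^ n := by
      rw [Unitization.inr_sub, Unitization.inr_mul, hinr, mul_sub, mul_one, sub_sub_cancel]
    have hsq : ‖x - x * eSeq M h n‖ ^ 2 = ‖W ^ n * (H * W ^ n)‖ := by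
      have h1 : ‖x - x * eSeq M h n‖ ^ 2
          = ‖star ((x : Unitization ℂ A) * W ^ n) * ((x : Unitization ℂ A) * W ^ n)‖ := by
        rw [CStarRing.norm_star_mul_self, ← Unitization.norm_inr (𝕜 := ℂ) (x - x * eSeq M h n),
          hxi, sq]
      rw [h1, star_mul, (hWsa.pow n).star_eq, hHeq]
      simp only [mul_assoc]
    rw [hsq]
    -- identify with cfc
    have hfW : cfc (fun t : ℝ => 1 - M⁻¹ * t) H = W := by
      rw [cfc_sub _ _ H (by fun_prop) (by fun_prop), cfc_const_one ℝ H,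
        cfc_const_mul_id M⁻¹ H, hWdef]
    have hkey : W ^ n * (H * W ^ n)
        = cfc (fun t : ℝ => (1 - M⁻¹ * t) ^ n * (t * (1 - M⁻¹ * t) ^ n)) H := by
      rw [cfc_mul _ _ H (by fun_prop) (by fun_prop), cfc_mul _ _ H (by fun_prop) (by fun_prop),
        cfc_pow _ n H (by fun_prop), cfc_id' ℝ H, hfW]
    rw [hkey]
    apply norm_cfc_le (by positivity)
    intro t ht
    have ht0 : 0 ≤ t := spectrum_nonneg_of_nonneg hH0 ht
    have htM : t ≤ M := by
      have := spectrum.norm_le_norm_of_mem ht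
      rw [Real.norm_eq_abs, abs_of_nonneg ht0] at this
      rw [hHnorm] at this
      linarith
    set s : ℝ := M⁻¹ * t with hsdef
    have hs0 : 0 ≤ s := by positivity
    have hs1 : s ≤ 1 := by
      rw [hsdef]
      calc M⁻¹ * t ≤ M⁻¹ * M := mul_le_mul_of_nonneg_left htM (by positivity)
        _ = 1 := inv_mul_cancel₀ hM.ne'
    have hts : t = M * s := by rw [hsdef, ← mul_assoc, mul_inv_cancel₀ hM.ne', one_mul]
    have h2n : 1 ≤ 2 * n := by omega
    have hsb := sbound_aux (2 * n) h2n hs0 hs1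
    have hone : (1 : ℝ) - M⁻¹ * t = 1 - s := by rw [hsdef]
    have hval : (1 - M⁻¹ * t) ^ n * (t * (1 - M⁻¹ * t) ^ n) = M * (s * (1 - s) ^ (2 * n)) := by
      rw [hone, hts]; ring
    push_cast at hsb
    rw [Real.norm_eq_abs, hval, abs_of_nonneg
      (mul_nonneg hM.le (mul_nonneg hs0 (pow_nonneg (by linarith) _)))]
    have hfin : M * (s * (1 - s) ^ (2 * n)) ≤ M * (1 / (2 * n)) :=
      mul_le_mul_of_nonneg_left hsb hM.le
    calc M * (s * (1 - s) ^ (2 * n)) ≤ M * (1 / (2 * n)) := hfin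
      _ = M / (2 * n) := by ring
  -- choose n large enough
  obtain ⟨n, hn1, hn2⟩ : ∃ n : ℕ, 1 ≤ n ∧ M / (2 * n) ≤ ε ^ 2 := by
    obtain ⟨n, hn⟩ := exists_nat_ge (M / (2 * ε ^ 2))
    refine ⟨n + 1, Nat.le_add_left 1 n, ?_⟩
    have hM2 : M ≤ 2 * ε ^ 2 * n := by
      rw [div_le_iff₀ (by positivity)] at hn; linarith
    rw [div_le_iff₀ (by positivity : (0:ℝ) < 2 * ((n : ℕ) + 1 : ℕ))]
    push_cast
    nlinarith [sq_nonneg ε]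
  refine ⟨eSeq M h n, fun T hx => by rw [hh]; exact eSeq_mem M x T hx n, ?_, hcontr n⟩
  have := (hxest n hn1).trans hn2
  nlinarith [norm_nonneg (x - x * eSeq M h n), hε.le]

private lemma step_lemma (I J K : TwoSidedIdeal A) {a b : A} {ε : ℝ} (hε : 0 < ε)
    (ha : a ∈ I) (hb : b ∈ J) (hd : a - b ∈ K) :
    ∃ a' b' c k : A, a' ∈ I ∧ b' ∈ J ∧ a' - b' ∈ K ∧ c ∈ I ∧ c ∈ J ∧ k ∈ K ∧
      a = c + k + a' ∧ ‖c‖ ≤ 2 * (‖b‖ + ‖a - b‖) ∧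
      ‖b'‖ ≤ ε ∧ ‖a' - b'‖ ≤ ε := by
  obtain ⟨e, heM, heb, hec⟩ := exists_approx b hε
  have hmul_e : ∀ z : A, ‖z * e‖ ≤ 2 * ‖z‖ := fun z => by
    calc ‖z * e‖ = ‖z - (z - z * e)‖ := by rw [sub_sub_cancel]
      _ ≤ ‖z‖ + ‖z - z * e‖ := norm_sub_le _ _
      _ ≤ 2 * ‖z‖ := by linarith [hec z]
  have hcI : a * e ∈ I := I.mul_mem_right _ _ ha
  have hcJ : a * e ∈ J := J.mul_mem_left _ _ (heM J hb)
  have hat1I : a - a * e ∈ I := sub_mem ha hcI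
  have hbtJ : b - b * e ∈ J := sub_mem hb (J.mul_mem_right _ _ hb)
  have hdt : (a - a * e) - (b - b * e) = (a - b) - (a - b) * e := by noncomm_ring
  have hdtK : (a - b) - (a - b) * e ∈ K := sub_mem hd (K.mul_mem_right _ _ hd)
  obtain ⟨u, huM, hdu, huc⟩ := exists_approx ((a - b) - (a - b) * e) hε
  have huK : u ∈ K := huM K hdtK
  refine ⟨(a - a * e) - (a - a * e) * u, (b - b * e) - (b - b * e) * u, a * e,
    (a - a * e) * u, sub_mem hat1I (I.mul_mem_right _ _ hat1I),
    sub_mem hbtJ (J.mul_mem_right _ _ hbtJ), ?_, hcI, hcJ,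
    K.mul_mem_left _ _ huK, by noncomm_ring, ?_, ?_, ?_⟩
  · have key : ((a - a * e) - (a - a * e) * u) - ((b - b * e) - (b - b * e) * u)
        = ((a - b) - (a - b) * e) - ((a - b) - (a - b) * e) * u := by noncomm_ring
    rw [key]
    exact sub_mem hdtK (K.mul_mem_right _ _ hdtK)
  · have hae : a * e = b * e + ((a - b) * e) := by noncomm_ring
    calc ‖a * e‖ = ‖b * e + (a - b) * e‖ := by rw [← hae]
      _ ≤ ‖b * e‖ + ‖(a - b) * e‖ := norm_add_le _ _
      _ ≤ 2 * ‖b‖ + 2 * ‖a - b‖ := add_le_add (hmul_e b) (hmul_e (a - b))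
      _ = 2 * (‖b‖ + ‖a - b‖) := by ring
  · calc ‖(b - b * e) - (b - b * e) * u‖ ≤ ‖b - b * e‖ := huc _
      _ ≤ ε := heb
  · have key : ((a - a * e) - (a - a * e) * u) - ((b - b * e) - (b - b * e) * u)
        = ((a - b) - (a - b) * e) - ((a - b) - (a - b) * e) * u := by noncomm_ring
    rw [key]
    exact hdu

end CStarAux

/-- In a (non-unital) C*-algebra `A`, for closed two-sided ideals
`I, J, K`: for all `a ∈ I` and `b ∈ J` with `a - b ∈ K` there exists `c ∈ I ∩ J` with
`a - c ∈ K`.  (Equivalently, the image of `I ∩ J` in `A/K` equals the intersection of the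
images of `I` and `J`.) -/
theorem exists_mem_inter_sub_mem
    {A : Type*} [NonUnitalCStarAlgebra A]
    (I J K : TwoSidedIdeal A)
    (hI : IsClosed (I : Set A)) (hJ : IsClosed (J : Set A)) (hK : IsClosed (K : Set A)) :
    ∀ a ∈ I, ∀ b ∈ J, a - b ∈ K → ∃ c ∈ (I : Set A) ∩ (J : Set A), a - c ∈ K := by
  intro a ha b hb hab
  set R : ℝ := ‖b‖ + ‖a - b‖ + 1 with hR
  have hR0 : 0 < R := by positivity
  let P : ℕ → A × A × A × A → Prop := fun n s =>
    s.1 ∈ I ∧ s.2.1 ∈ J ∧ s.1 - s.2.1 ∈ K ∧ s.2.2.1 ∈ I ∧ s.2.2.1 ∈ J ∧ s.2.2.2 ∈ K ∧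
      a = s.2.2.1 + s.2.2.2 + s.1 ∧ ‖s.2.1‖ ≤ R * (1/2)^n ∧ ‖s.1 - s.2.1‖ ≤ R * (1/2)^n
  have base : P 0 (a, b, 0, 0) := by
    refine ⟨ha, hb, hab, I.zero_mem, J.zero_mem, K.zero_mem, by simp, ?_, ?_⟩ <;>
      · simp only [pow_zero, mul_one, hR]
        linarith [norm_nonneg b, norm_nonneg (a - b)]
  have step : ∀ n (s : A × A × A × A), P n s →
      ∃ s' : A × A × A × A, P (n+1) s' ∧ ‖s'.2.2.1 - s.2.2.1‖ ≤ 4 * R * (1/2)^n := by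
    rintro n ⟨p, q, C, k0⟩ ⟨hpI, hqJ, hpqK, hCI, hCJ, hkK, hsum, hqn, hdn⟩
    have hε : (0:ℝ) < R * (1/2)^(n+1) := by positivity
    obtain ⟨a', b', c, k, ha'I, hb'J, ha'b'K, hcI, hcJ, hkK', hdecomp, hcb, hb'n, hd'n⟩ :=
      step_lemma I J K hε hpI hqJ hpqK
    refine ⟨(a', b', C + c, k0 + k), ⟨ha'I, hb'J, ha'b'K, add_mem hCI hcI, add_mem hCJ hcJ,
      add_mem hkK hkK', by show a = (C + c) + (k0 + k) + a'; rw [hsum, hdecomp]; show C + k0 + (c + k + a') = C + c + (k0 + k) + a'; abel, hb'n, hd'n⟩, ?_⟩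
    simp only
    rw [add_sub_cancel_left]
    calc ‖c‖ ≤ 2 * (‖q‖ + ‖p - q‖) := hcb
      _ ≤ 4 * R * (1/2)^n := by linarith
  let f : ∀ n : ℕ, {s : A × A × A × A // P n s} := fun n =>
    Nat.rec ⟨(a, b, 0, 0), base⟩
      (fun k ih => ⟨Classical.choose (step k ih.1 ih.2),
        (Classical.choose_spec (step k ih.1 ih.2)).1⟩) n
  have hfsucc : ∀ n, (f (n+1)).1 = Classical.choose (step n (f n).1 (f n).2) := fun n => rfl
  have hfdist : ∀ n, ‖(f (n+1)).1.2.2.1 - (f n).1.2.2.1‖ ≤ 4 * R * (1/2)^n := fun n => by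
    rw [hfsucc n]
    exact (Classical.choose_spec (step n (f n).1 (f n).2)).2
  -- the sequence of partial sums
  set Cs : ℕ → A := fun n => (f n).1.2.2.1 with hCs
  have hcauchy : CauchySeq Cs := by
    apply cauchySeq_of_le_geometric (1/2 : ℝ) (4 * R) (by norm_num)
    intro n
    rw [dist_eq_norm, norm_sub_rev]
    exact hfdist n
  obtain ⟨c, hc⟩ := cauchySeq_tendsto_of_complete hcauchy
  have hCsI : ∀ n, Cs n ∈ I := fun n => (f n).2.2.2.2.1
  have hCsJ : ∀ n, Cs n ∈ J := fun n => (f n).2.2.2.2.2.1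
  have hcI : c ∈ I := hI.mem_of_tendsto hc (Filter.Eventually.of_forall hCsI)
  have hcJ : c ∈ J := hJ.mem_of_tendsto hc (Filter.Eventually.of_forall hCsJ)
  -- p n tends to zero
  have hp0 : Filter.Tendsto (fun n => (f n).1.1) Filter.atTop (nhds 0) := by
    refine squeeze_zero_norm (a := fun n => 2 * R * (1/2:ℝ)^n) ?_ ?_
    · intro n
      have h1 := (f n).2.2.2.2.2.2.2.2.1
      have h2 := (f n).2.2.2.2.2.2.2.2.2
      calc ‖(f n).1.1‖ = ‖(f n).1.2.1 + ((f n).1.1 - (f n).1.2.1)‖ := by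
            congr 1; abel
        _ ≤ ‖(f n).1.2.1‖ + ‖(f n).1.1 - (f n).1.2.1‖ := norm_add_le _ _
        _ ≤ 2 * R * (1/2)^n := by linarith
    · have := tendsto_pow_atTop_nhds_zero_of_lt_one (by norm_num : (0:ℝ) ≤ 1/2)
        (by norm_num : (1/2:ℝ) < 1)
      simpa using this.const_mul (2 * R)
  -- K part tends to a - c
  have hKs : ∀ n, a - Cs n - (f n).1.1 ∈ K := by
    intro n
    have hsum := (f n).2.2.2.2.2.2.2.1
    have : a - Cs n - (f n).1.1 = (f n).1.2.2.2 := by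
      rw [hCs]; rw [hsum]; abel
    rw [this]
    exact (f n).2.2.2.2.2.2.1
  have htend : Filter.Tendsto (fun n => a - Cs n - (f n).1.1) Filter.atTop (nhds (a - c)) := by
    have := ((tendsto_const_nhds (x := a)).sub hc).sub hp0
    simpa using this
  exact ⟨c, ⟨hcI, hcJ⟩, hK.mem_of_tendsto htend (Filter.Eventually.of_forall hKs)⟩
end

section
/- Let A be a C*-algebra, I a closed two-sided ideal of A, and (J_s)_{s ∈ S} an arbitrary family of closed two-sided ideals of A. Then I ∩ cl(span(⋃_{s ∈ S} J_s)) = cl(span(⋃_{s ∈ S} (I ∩ J_s))), where cl denotes norm closure and span the linear span. Consequently, the complete lattice of closed two-sided ideals of A (with infima given by intersections and suprema given by closures of sums) is a frame: binary meets distribute over arbitrary joins. -/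
open scoped ContinuousMapZero

/-- Key approximation lemma: every element of a C⋆-algebra is approximated by `a * c` where
`c = cfcₙ f (star a * a)` for a continuous function `f` vanishing at `0`. -/
lemma key_approx {A : Type*} [NonUnitalCStarAlgebra A] (a : A) {ε : ℝ} (hε : 0 < ε) :
    ∃ f : ℝ → ℝ, Continuous f ∧ f 0 = 0 ∧ ‖a - a * cfcₙ f (star a * a)‖ < ε := by
  have hb : IsSelfAdjoint (star a * a) := IsSelfAdjoint.star_mul_self a
  set b := star a * a with hb_def
  set δ : ℝ := ε ^ 4 with hδ_def
  have hδ : 0 < δ := by positivity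
  have hden : ∀ t : ℝ, δ + t ^ 2 ≠ 0 := fun t => by positivity
  set f : ℝ → ℝ := fun t => t ^ 2 * (δ + t ^ 2)⁻¹ with hf_def
  have hf : Continuous f :=
    (continuous_pow 2).mul ((continuous_const.add (continuous_pow 2)).inv₀ hden)
  have hf0 : f 0 = 0 := by simp [hf_def]
  refine ⟨f, hf, hf0, ?_⟩
  set c := cfcₙ f b with hc_def
  have hscsa : IsSelfAdjoint c := cfcₙ_predicate f b
  have hexp : star (a - a * c) * (a - a * c) = b - b * c - c * b + c * (b * c) := by
    rw [star_sub, star_mul, hscsa.star_eq, hb_def]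
    noncomm_ring
  have hfc : ContinuousOn f (quasispectrum ℝ b) := hf.continuousOn
  have hid : ContinuousOn (fun t : ℝ => t) (quasispectrum ℝ b) := continuousOn_id
  have hidf : ContinuousOn (fun t : ℝ => t * f t) (quasispectrum ℝ b) :=
    (continuous_id.mul hf).continuousOn
  have hidf0 : (fun t : ℝ => t * f t) 0 = 0 := by simp
  have hmul1 : cfcₙ (fun t : ℝ => t * f t) b = b * c := by
    have h := cfcₙ_mul (fun t : ℝ => t) f b hid rfl hfc hf0
    rw [cfcₙ_id' ℝ b] at h
    exact h
  have hmul2 : cfcₙ (fun t : ℝ => f t * t) b = c * b := by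
    have h := cfcₙ_mul f (fun t : ℝ => t) b hfc hf0 hid rfl
    rw [cfcₙ_id' ℝ b] at h
    exact h
  have hmul3 : cfcₙ (fun t : ℝ => f t * (t * f t)) b = c * (b * c) := by
    have h := cfcₙ_mul f (fun t : ℝ => t * f t) b hfc hf0 hidf hidf0
    exact h.trans (by rw [hmul1])
  have hkey : cfcₙ (fun t : ℝ => t * (1 - f t) ^ 2) b = b - b * c - c * b + c * (b * c) := by
    have heq : (fun t : ℝ => t * (1 - f t) ^ 2)
        = fun t : ℝ => t - t * f t - f t * t + f t * (t * f t) := by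
      funext t; ring
    have c1 : ContinuousOn (fun t : ℝ => t - t * f t - f t * t) (quasispectrum ℝ b) :=
      ((continuous_id.sub (continuous_id.mul hf)).sub (hf.mul continuous_id)).continuousOn
    have c2 : ContinuousOn (fun t : ℝ => f t * (t * f t)) (quasispectrum ℝ b) :=
      (hf.mul (continuous_id.mul hf)).continuousOn
    have c3 : ContinuousOn (fun t : ℝ => t - t * f t) (quasispectrum ℝ b) :=
      (continuous_id.sub (continuous_id.mul hf)).continuousOn
    have c4 : ContinuousOn (fun t : ℝ => f t * t) (quasispectrum ℝ b) :=
      (hf.mul continuous_id).continuousOn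
    have e1 := cfcₙ_add (fun t : ℝ => t - t * f t - f t * t) (fun t : ℝ => f t * (t * f t)) b c1
      (by simp [hf0]) c2 (by simp [hf0])
    have e2 := cfcₙ_sub (fun t : ℝ => t - t * f t) (fun t : ℝ => f t * t) b c3 (by simp [hf0]) c4
      (by simp [hf0])
    have e3 := cfcₙ_sub (fun t : ℝ => t) (fun t : ℝ => t * f t) b hid rfl hidf hidf0
    rw [heq]
    refine e1.trans ?_
    rw [e2, e3, cfcₙ_id' ℝ b, hmul1, hmul2, hmul3]
  have hbound : ∀ t : ℝ, |t * (1 - f t) ^ 2| ≤ ε ^ 2 / 2 := by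
    intro t
    have h1 : 1 - f t = δ * (δ + t ^ 2)⁻¹ := by
      rw [hf_def]
      field_simp
      ring
    rw [h1, abs_mul, abs_pow, abs_mul, abs_inv]
    have h2 : |δ + t ^ 2| = δ + t ^ 2 := abs_of_pos (by positivity)
    have h3 : |δ| = δ := abs_of_pos hδ
    rw [h2, h3, mul_pow, inv_pow, ← div_eq_mul_inv (δ ^ 2) ((δ + t ^ 2) ^ 2), ← mul_div_assoc,
      div_le_div_iff₀ (by positivity) (by norm_num : (0:ℝ) < 2)]
    rw [hδ_def, ← sq_abs t]
    generalize |t| = s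
    nlinarith [mul_nonneg (sq_nonneg ε) (sq_nonneg (ε ^ 4 - s * ε ^ 2)),
      mul_nonneg (sq_nonneg ε) (mul_nonneg (sq_nonneg s) (sq_nonneg (ε ^ 2))),
      mul_nonneg (sq_nonneg ε) (sq_nonneg (s ^ 2))]
  have hFb : ‖cfcₙ (fun t : ℝ => t * (1 - f t) ^ 2) b‖ ≤ ε ^ 2 / 2 :=
    norm_cfcₙ_le fun t _ => hbound t
  have h1 : ‖a - a * c‖ ^ 2 ≤ ε ^ 2 / 2 := by
    rw [sq, ← CStarRing.norm_star_mul_self, hexp, ← hkey]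
    exact hFb
  nlinarith [norm_nonneg (a - a * c), hε, sq_nonneg (‖a - a * c‖ - ε)]

/-- If `K` is a closed subset of a C⋆-algebra which contains `0` and a selfadjoint element `b`,
and is stable under addition, multiplication and real scalar multiplication, then `K` contains
`cfcₙ f b` for every `f`. -/
lemma cfcn_mem_closed {A : Type*} [NonUnitalCStarAlgebra A] {b : A} (hb : IsSelfAdjoint b)
    {K : Set A} (hK : IsClosed K) (hbK : b ∈ K) (h0K : (0 : A) ∈ K)
    (hadd : ∀ x ∈ K, ∀ y ∈ K, x + y ∈ K) (hmul : ∀ x ∈ K, ∀ y ∈ K, x * y ∈ K)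
    (hsmul : ∀ (r : ℝ), ∀ x ∈ K, r • x ∈ K)
    (f : ℝ → ℝ) : cfcₙ f b ∈ K := by
  by_cases h : ContinuousOn f (quasispectrum ℝ b) ∧ f 0 = 0
  · rw [cfcₙ_apply f b h.1 h.2 hb]
    set φ := cfcₙHom (R := ℝ) hb with hφ
    suffices H : ∀ g : ContinuousMapZero (quasispectrum ℝ b) ℝ, φ g ∈ K from H _
    intro g
    have h0 : ((0 : quasispectrum ℝ b) : ℝ) = 0 := rfl
    induction g using ContinuousMapZero.induction_on_of_compact with
    | zero => simpa using h0K
    | id =>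
      have hid : φ (ContinuousMapZero.id _) = b := cfcₙHom_id hb
      rw [hid]; exact hbK
    | star_id =>
      have hid : φ (ContinuousMapZero.id _) = b := cfcₙHom_id hb
      rw [map_star, hid, hb.star_eq]; exact hbK
    | add g₁ g₂ h₁ h₂ => rw [map_add]; exact hadd _ h₁ _ h₂
    | mul g₁ g₂ h₁ h₂ => rw [map_mul]; exact hmul _ h₁ _ h₂
    | smul r g hg => rw [map_smul]; exact hsmul r _ hg
    | frequently g hg =>
      have hcl : IsClosed {g | φ g ∈ K} := hK.preimage (cfcₙHom_continuous hb)
      exact hcl.closure_subset (mem_closure_iff_frequently.mpr hg)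
  · obtain (h1 | h2) := not_and_or.mp h
    · rw [cfcₙ_apply_of_not_continuousOn b h1]; exact h0K
    · rw [cfcₙ_apply_of_not_map_zero b h2]; exact h0K

/-- In a (non-unital) C*-algebra `A`, for a closed two-sided ideal `I`
and an arbitrary family `(J_s)_{s ∈ S}` of closed two-sided ideals one has
`I ∩ cl(span(⋃ s, J s)) = cl(span(⋃ s, I ∩ J s))`.  Consequently the complete lattice of
closed two-sided ideals of `A` is a frame: binary meets distribute over arbitrary joins. -/
theorem inter_closure_span_iUnion_eq
    {A : Type*} [NonUnitalCStarAlgebra A] {S : Type*}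
    (I : TwoSidedIdeal A) (J : S → TwoSidedIdeal A)
    (hI : IsClosed (I : Set A)) (hJ : ∀ s, IsClosed (J s : Set A)) :
    (I : Set A) ∩ closure (Submodule.span ℂ (⋃ s, (J s : Set A)) : Set A) =
      closure (Submodule.span ℂ (⋃ s, ((I : Set A) ∩ (J s : Set A))) : Set A) := by
  set M : Submodule ℂ A := Submodule.span ℂ (⋃ s, (J s : Set A)) with hM
  set N : Submodule ℂ A := Submodule.span ℂ (⋃ s, ((I : Set A) ∩ (J s : Set A))) with hN
  -- `M` is stable under left multiplication by arbitrary elements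
  have hMl : ∀ (y : A), ∀ m ∈ M, y * m ∈ M := by
    intro y m hm
    induction hm using Submodule.span_induction with
    | mem x hx =>
      obtain ⟨_, ⟨s, rfl⟩, hx⟩ := hx
      exact Submodule.subset_span (Set.mem_iUnion.mpr ⟨s, (J s).mul_mem_left y x hx⟩)
    | zero => rw [mul_zero]; exact M.zero_mem
    | add x z _ _ hx hz => rw [mul_add]; exact M.add_mem hx hz
    | smul c x _ hx => rw [mul_smul_comm]; exact M.smul_mem c hx
  have hMcl : ∀ (y : A), ∀ m ∈ closure (M : Set A), y * m ∈ closure (M : Set A) := by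
    intro y m hm
    exact map_mem_closure (continuous_mul_left y) hm fun x hx => hMl y x hx
  -- closed ideals are closed under complex scalar multiplication
  have hIsmul : ∀ (z : ℂ) (x : A), x ∈ I → z • x ∈ I := by
    intro z x hx
    suffices h : z • x ∈ closure (I : Set A) by rwa [hI.closure_eq] at h
    rw [Metric.mem_closure_iff]
    intro ε hε
    rcases eq_or_ne z 0 with rfl | hz
    · exact ⟨0, I.zero_mem, by simpa using hε⟩
    · have hz' : 0 < ‖z‖ := norm_pos_iff.mpr hz
      obtain ⟨f, hf, hf0, hlt⟩ := key_approx x (div_pos hε hz')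
      refine ⟨x * (z • cfcₙ f (star x * x)), I.mul_mem_right x _ hx, ?_⟩
      have heq : z • x - x * (z • cfcₙ f (star x * x))
          = z • (x - x * cfcₙ f (star x * x)) := by
        rw [mul_smul_comm, ← smul_sub]
      rw [dist_eq_norm, heq, norm_smul]
      calc ‖z‖ * ‖x - x * cfcₙ f (star x * x)‖ < ‖z‖ * (ε / ‖z‖) := by
            exact mul_lt_mul_of_pos_left hlt hz'
        _ = ε := by rw [mul_comm, div_mul_cancel₀ ε hz'.ne']
  -- hard direction
  have hard : ∀ a : A, a ∈ I → a ∈ closure (M : Set A) → a ∈ closure (N : Set A) := by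
    intro a haI haM
    have haN : ∀ m ∈ M, a * m ∈ (N : Set A) := by
      intro m hm
      induction hm using Submodule.span_induction with
      | mem x hx =>
        obtain ⟨_, ⟨s, rfl⟩, hx⟩ := hx
        exact Submodule.subset_span
          (Set.mem_iUnion.mpr ⟨s, ⟨I.mul_mem_right a x haI, (J s).mul_mem_left a x hx⟩⟩)
      | zero => rw [mul_zero]; exact N.zero_mem
      | add x z _ _ hx hz => rw [mul_add]; exact N.add_mem hx hz
      | smul c x _ hx => rw [mul_smul_comm]; exact N.smul_mem c hx
    have haNcl : ∀ m ∈ closure (M : Set A), a * m ∈ closure (N : Set A) := by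
      intro m hm
      exact map_mem_closure (continuous_mul_left a) hm haN
    have hbM : star a * a ∈ closure (M : Set A) := hMcl (star a) a haM
    have hmem : ∀ ε > 0, ∃ y ∈ closure (N : Set A), dist a y < ε := by
      intro ε hε
      obtain ⟨f, hf, hf0, hlt⟩ := key_approx a hε
      have hcM : cfcₙ f (star a * a) ∈ closure (M : Set A) := by
        refine cfcn_mem_closed (IsSelfAdjoint.star_mul_self a) isClosed_closure hbM
          (subset_closure M.zero_mem) ?_ ?_ ?_ f
        · intro x hx y hy
          have := M.topologicalClosure.add_mem (by exact hx) (by exact hy)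
          exact this
        · intro x hx y hy
          exact hMcl x y hy
        · intro r x hx
          have := M.topologicalClosure.smul_mem (r : ℂ) (x := x) (by exact hx)
          rw [Complex.coe_smul] at this
          exact this
      exact ⟨a * cfcₙ f (star a * a), haNcl _ hcM, by rwa [dist_eq_norm]⟩
    have : a ∈ closure (closure (N : Set A)) := Metric.mem_closure_iff.mpr hmem
    rwa [closure_closure] at this
  -- the ideal as a complex submodule
  set IS : Submodule ℂ A :=
    { carrier := (I : Set A)
      add_mem' := fun hx hy => I.add_mem hx hy
      zero_mem' := I.zero_mem
      smul_mem' := fun z x hx => hIsmul z x hx } with hIS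
  have hNI : closure (N : Set A) ⊆ (I : Set A) := by
    have h1 : N ≤ IS := Submodule.span_le.mpr <| by
      intro x hx
      obtain ⟨_, ⟨s, rfl⟩, hx⟩ := hx
      exact hx.1
    have h2 : closure (N : Set A) ⊆ closure (IS : Set A) := closure_mono h1
    rwa [show (IS : Set A) = (I : Set A) from rfl, hI.closure_eq] at h2
  have hNM : closure (N : Set A) ⊆ closure (M : Set A) :=
    closure_mono <| Submodule.span_mono <| Set.iUnion_mono fun s => Set.inter_subset_right
  ext x
  constructor
  · rintro ⟨hxI, hxM⟩
    exact hard x hxI hxM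
  · intro hx
    exact ⟨hNI hx, hNM hx⟩
end

section
/- Let A be a C*-algebra, D a nonempty directed preordered set, F a nonempty finite set, and for each f ∈ F let (I_{d,f})_{d ∈ D} be a family of closed two-sided ideals of A which is monotone in d, i.e. I_{d,f} ⊆ I_{d',f} whenever d ≤ d'. Then cl(⋃_{d ∈ D} ⋂_{f ∈ F} I_{d,f}) = ⋂_{f ∈ F} cl(⋃_{d ∈ D} I_{d,f}), where cl denotes the norm closure in A. -/
open scoped ContinuousMapZero NonUnitalContinuousFunctionalCalculus

local notation "σₙ" => quasispectrum

section Aux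

variable {A : Type*} [NonUnitalCStarAlgebra A]

private lemma aux_bound {δ : ℝ} (hδ : 0 < δ) (t : ℝ) :
    |t * (1 - min 1 (|t| / δ)) ^ 2| ≤ δ := by
  rcases le_total (|t|) δ with h | h
  · have h1 : 0 ≤ min 1 (|t| / δ) := le_min zero_le_one (by positivity)
    have h2 : min 1 (|t| / δ) ≤ 1 := min_le_left _ _
    have : |t * (1 - min 1 (|t| / δ)) ^ 2| = |t| * (1 - min 1 (|t| / δ)) ^ 2 := by
      rw [abs_mul, abs_of_nonneg (sq_nonneg (1 - min 1 (|t| / δ)))]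
    rw [this]
    have h3 : (1 - min 1 (|t| / δ)) ^ 2 ≤ 1 := by nlinarith
    calc |t| * (1 - min 1 (|t| / δ)) ^ 2 ≤ δ * 1 :=
          mul_le_mul h h3 (sq_nonneg _) hδ.le
      _ = δ := mul_one δ
  · have h1 : (1 : ℝ) ≤ |t| / δ := (one_le_div hδ).mpr h
    have : min 1 (|t| / δ) = 1 := min_eq_left h1
    simp [this, hδ.le]

private lemma aux_cfc (j : A) {δ : ℝ} (hδ : 0 < δ) :
    ∃ u : A, u ∈ closure (NonUnitalStarAlgebra.adjoin ℝ {j * star j} : Set A) ∧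
      IsSelfAdjoint u ∧ ‖u‖ ≤ 1 ∧ ‖j - u * j‖ ^ 2 ≤ δ := by
  have ha : IsSelfAdjoint (j * star j) := .mul_star_self j
  set a := j * star j with ha_def
  let f₀ : C(σₙ ℝ a, ℝ)₀ :=
    ⟨⟨fun t => min 1 (|(t : ℝ)| / δ), by fun_prop⟩, by norm_num⟩
  set u := cfcₙHom ha f₀ with hu_def
  have hu_sa : IsSelfAdjoint u := cfcₙHom_predicate ha f₀
  refine ⟨u, ?_, hu_sa, ?_, ?_⟩
  · -- membership in the closure of the adjoined subalgebra
    have hdense := ContinuousMapZero.adjoin_id_dense (σₙ ℝ a)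
    have hf₀ : f₀ ∈ closure
        (NonUnitalStarAlgebra.adjoin ℝ {(ContinuousMapZero.id (σₙ ℝ a) : C(σₙ ℝ a, ℝ)₀)} : Set _) :=
      hdense f₀
    have hmem : u ∈ (cfcₙHom ha) '' closure
        (NonUnitalStarAlgebra.adjoin ℝ {(ContinuousMapZero.id (σₙ ℝ a) : C(σₙ ℝ a, ℝ)₀)} : Set _) :=
      ⟨f₀, hf₀, rfl⟩
    have h2 := image_closure_subset_closure_image (cfcₙHom_continuous ha) hmem
    refine closure_mono ?_ h2
    intro b hb
    obtain ⟨g, hg, rfl⟩ := hb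
    have : cfcₙHom ha g ∈ (NonUnitalStarSubalgebra.map (cfcₙHom ha)
        (NonUnitalStarAlgebra.adjoin ℝ {(ContinuousMapZero.id (σₙ ℝ a) : C(σₙ ℝ a, ℝ)₀)})) :=
      ⟨g, hg, rfl⟩
    rw [NonUnitalStarAlgHom.map_adjoin_singleton] at this
    have hid : cfcₙHom ha (ContinuousMapZero.id (σₙ ℝ a) : C(σₙ ℝ a, ℝ)₀) = a := cfcₙHom_id ha
    rwa [hid] at this
  · -- norm bound
    rw [hu_def, norm_cfcₙHom a f₀ ha, ContinuousMapZero.norm_def]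
    refine (ContinuousMap.norm_le _ zero_le_one).mpr fun t => ?_
    have h1 : 0 ≤ min 1 (|(t : ℝ)| / δ) := le_min zero_le_one (by positivity)
    have h2 : min 1 (|(t : ℝ)| / δ) ≤ 1 := min_le_left _ _
    show |min 1 (|(t : ℝ)| / δ)| ≤ 1
    rw [abs_of_nonneg h1]
    exact h2
  · -- the key estimate
    have hustar : star u = u := hu_sa.star_eq
    set X : C(σₙ ℝ a, ℝ)₀ := (ContinuousMapZero.id (σₙ ℝ a) : C(σₙ ℝ a, ℝ)₀) with hX_def
    have hX : cfcₙHom ha X = a := cfcₙHom_id ha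
    have key : (j - u * j) * star (j - u * j) =
        cfcₙHom ha (X - X * f₀ - f₀ * X + f₀ * (X * f₀)) := by
      rw [map_add, map_sub, map_sub, map_mul, map_mul, map_mul, map_mul, hX, ← hu_def]
      rw [star_sub, star_mul, hustar]
      rw [ha_def]
      noncomm_ring
    have h1 : ‖j - u * j‖ ^ 2 = ‖(j - u * j) * star (j - u * j)‖ := by
      rw [CStarRing.norm_self_mul_star, sq]
    rw [h1, key, norm_cfcₙHom a _ ha, ContinuousMapZero.norm_def]
    refine (ContinuousMap.norm_le _ hδ.le).mpr fun t => ?_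
    have hval : ((X - X * f₀ - f₀ * X + f₀ * (X * f₀) : C(σₙ ℝ a, ℝ)₀) t : ℝ) =
        (t : ℝ) * (1 - min 1 (|(t : ℝ)| / δ)) ^ 2 := by
      show ((X : C(σₙ ℝ a, ℝ)₀) t - (X * f₀ : C(σₙ ℝ a, ℝ)₀) t - (f₀ * X : C(σₙ ℝ a, ℝ)₀) t
          + (f₀ * (X * f₀) : C(σₙ ℝ a, ℝ)₀) t : ℝ) = _
      have hXt : (X : C(σₙ ℝ a, ℝ)₀) t = (t : ℝ) := rfl
      have hft : (f₀ : C(σₙ ℝ a, ℝ)₀) t = min 1 (|(t : ℝ)| / δ) := rfl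
      simp only [ContinuousMapZero.coe_mul, Pi.mul_apply, hXt, hft]
      ring
    show |((X - X * f₀ - f₀ * X + f₀ * (X * f₀) : C(σₙ ℝ a, ℝ)₀) t)| ≤ δ
    rw [hval]
    exact aux_bound hδ (t : ℝ)

private lemma aux_one (x : A) {ε : ℝ} (hε : 0 < ε) :
    ∃ u : A, ‖u‖ ≤ 1 ∧ ‖x - u * x‖ < ε := by
  obtain ⟨u, -, -, hu1, hu2⟩ := aux_cfc x (δ := ε ^ 2 / 2) (by positivity)
  refine ⟨u, hu1, ?_⟩
  nlinarith [norm_nonneg (x - u * x)]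

private lemma aux_smul {I : TwoSidedIdeal A} (hI : IsClosed (I : Set A)) {x : A}
    (hx : x ∈ I) (r : ℝ) : r • x ∈ I := by
  have h : r • x ∈ closure (I : Set A) := by
    rw [Metric.mem_closure_iff]
    intro ε hε
    obtain ⟨u, -, hu⟩ := aux_one x (ε := ε / (|r| + 1)) (by positivity)
    refine ⟨(r • u) * x, I.mul_mem_left _ _ hx, ?_⟩
    rw [dist_eq_norm, smul_mul_assoc, ← smul_sub, norm_smul, Real.norm_eq_abs]
    have h1 : |r| * ‖x - u * x‖ ≤ |r| * (ε / (|r| + 1)) :=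
      mul_le_mul_of_nonneg_left hu.le (abs_nonneg r)
    have h2 : |r| * (ε / (|r| + 1)) < ε := by
      rw [mul_div_assoc', div_lt_iff₀ (by positivity)]
      nlinarith [abs_nonneg r]
    linarith
  rwa [hI.closure_eq] at h

private lemma aux_approx {D : Type*} [Preorder D] [IsDirected D (· ≤ ·)]
    (I : D → TwoSidedIdeal A) (hcl : ∀ d, IsClosed (I d : Set A))
    (hmono : ∀ d d', d ≤ d' → (I d : Set A) ⊆ (I d' : Set A))
    {z : A} (hz : z ∈ closure (⋃ d, (I d : Set A))) {ε : ℝ} (hε : 0 < ε) :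
    ∃ u, (∃ d, u ∈ I d) ∧ ‖z - u * z‖ < ε := by
  set J : Set A := ⋃ d, (I d : Set A) with hJ_def
  obtain ⟨j, hjJ, hj⟩ := Metric.mem_closure_iff.mp hz (ε / 4) (by positivity)
  rw [dist_eq_norm] at hj
  obtain ⟨u₀, hu₀mem, hu₀sa, hu₀1, hu₀j⟩ := aux_cfc j (δ := (ε / 4) ^ 2) (by positivity)
  have hu₀j' : ‖j - u₀ * j‖ ≤ ε / 4 := by nlinarith [norm_nonneg (j - u₀ * j)]
  obtain ⟨d₀, hjd₀⟩ := Set.mem_iUnion.mp hjJ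
  -- the adjoined subalgebra sits inside `J`
  have hadjoin : ∀ b ∈ (NonUnitalStarAlgebra.adjoin ℝ {j * star j} : Set A), b ∈ J := by
    intro b hb
    rw [SetLike.mem_coe] at hb
    have key : b ∈ J ∧ star b ∈ J := by
      induction hb using NonUnitalStarAlgebra.adjoin_induction with
      | mem x hx =>
        obtain rfl : x = j * star j := hx
        have hm : j * star j ∈ I d₀ := (I d₀).mul_mem_right _ _ hjd₀
        have hs : star (j * star j) = j * star j := by simp [star_mul]
        refine ⟨Set.mem_iUnion.mpr ⟨d₀, hm⟩, ?_⟩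
        rw [hs]
        exact Set.mem_iUnion.mpr ⟨d₀, hm⟩
      | add x y hx hy ihx ihy =>
        obtain ⟨⟨dx, hdx⟩, ⟨dx', hdx'⟩⟩ := And.imp Set.mem_iUnion.mp Set.mem_iUnion.mp ihx
        obtain ⟨⟨dy, hdy⟩, ⟨dy', hdy'⟩⟩ := And.imp Set.mem_iUnion.mp Set.mem_iUnion.mp ihy
        obtain ⟨d₁, h1, h2⟩ := exists_ge_ge dx dy
        obtain ⟨d₂, h3, h4⟩ := exists_ge_ge dx' dy'
        refine ⟨Set.mem_iUnion.mpr ⟨d₁, (I d₁).add_mem (hmono _ _ h1 hdx) (hmono _ _ h2 hdy)⟩, ?_⟩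
        rw [star_add]
        exact Set.mem_iUnion.mpr ⟨d₂, (I d₂).add_mem (hmono _ _ h3 hdx') (hmono _ _ h4 hdy')⟩
      | zero =>
        refine ⟨Set.mem_iUnion.mpr ⟨d₀, (I d₀).zero_mem⟩, ?_⟩
        rw [star_zero]
        exact Set.mem_iUnion.mpr ⟨d₀, (I d₀).zero_mem⟩
      | mul x y hx hy ihx ihy =>
        obtain ⟨dy, hdy⟩ := Set.mem_iUnion.mp ihy.1
        obtain ⟨dx', hdx'⟩ := Set.mem_iUnion.mp ihx.2
        refine ⟨Set.mem_iUnion.mpr ⟨dy, (I dy).mul_mem_left _ _ hdy⟩, ?_⟩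
        rw [star_mul]
        exact Set.mem_iUnion.mpr ⟨dx', (I dx').mul_mem_left _ _ hdx'⟩
      | smul r x hx ihx =>
        obtain ⟨dx, hdx⟩ := Set.mem_iUnion.mp ihx.1
        obtain ⟨dx', hdx'⟩ := Set.mem_iUnion.mp ihx.2
        refine ⟨Set.mem_iUnion.mpr ⟨dx, aux_smul (hcl dx) hdx r⟩, ?_⟩
        rw [star_smul, star_trivial]
        exact Set.mem_iUnion.mpr ⟨dx', aux_smul (hcl dx') hdx' r⟩
      | star x hx ihx =>
        exact ⟨ihx.2, (star_star x).symm ▸ ihx.1⟩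
    exact key.1
  obtain ⟨u, humem, hud⟩ := Metric.mem_closure_iff.mp hu₀mem (ε / 4 / (‖z‖ + 1)) (by positivity)
  rw [dist_eq_norm] at hud
  refine ⟨u, Set.mem_iUnion.mp (hadjoin u humem), ?_⟩
  have decomp : z - u * z = (z - j) + (j - u₀ * j) + u₀ * (j - z) + (u₀ - u) * z := by
    noncomm_ring
  have e3 : ‖u₀ * (j - z)‖ < ε / 4 := by
    calc ‖u₀ * (j - z)‖ ≤ ‖u₀‖ * ‖j - z‖ := norm_mul_le _ _
      _ ≤ 1 * ‖j - z‖ := by gcongr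
      _ = ‖z - j‖ := by rw [one_mul, norm_sub_rev]
      _ < ε / 4 := hj
  have e4 : ‖(u₀ - u) * z‖ ≤ ε / 4 := by
    calc ‖(u₀ - u) * z‖ ≤ ‖u₀ - u‖ * ‖z‖ := norm_mul_le _ _
      _ ≤ (ε / 4 / (‖z‖ + 1)) * ‖z‖ := by
          exact mul_le_mul_of_nonneg_right hud.le (norm_nonneg z)
      _ ≤ ε / 4 := by
          rw [div_mul_eq_mul_div, div_le_iff₀ (by positivity)]
          nlinarith [norm_nonneg z]
  calc ‖z - u * z‖ = ‖(z - j) + (j - u₀ * j) + u₀ * (j - z) + (u₀ - u) * z‖ := by rw [decomp]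
    _ ≤ ‖(z - j) + (j - u₀ * j) + u₀ * (j - z)‖ + ‖(u₀ - u) * z‖ := norm_add_le _ _
    _ ≤ (‖(z - j) + (j - u₀ * j)‖ + ‖u₀ * (j - z)‖) + ‖(u₀ - u) * z‖ := by
        gcongr
        exact norm_add_le _ _
    _ ≤ ((‖z - j‖ + ‖j - u₀ * j‖) + ‖u₀ * (j - z)‖) + ‖(u₀ - u) * z‖ := by
        gcongr
        exact norm_add_le _ _
    _ < ε := by linarith

end Aux

/-- Let `A` be a (non-unital) C*-algebra, `D` a nonempty directed
preordered set, `F` a nonempty finite set, and for each `f ∈ F` let `(I d f)_{d ∈ D}` be a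
family of closed two-sided ideals of `A`, monotone in `d`.  Then
`cl(⋃ d, ⋂ f, I d f) = ⋂ f, cl(⋃ d, I d f)`. -/
theorem closure_iUnion_iInter_eq_iInter_closure_iUnion
    {A : Type*} [NonUnitalCStarAlgebra A]
    {D : Type*} [Preorder D] [Nonempty D] [IsDirected D (· ≤ ·)]
    {F : Type*} [Fintype F] [Nonempty F]
    (I : D → F → TwoSidedIdeal A)
    (hcl : ∀ d f, IsClosed (I d f : Set A))
    (hmono : ∀ (f : F) (d d' : D), d ≤ d' → (I d f : Set A) ⊆ (I d' f : Set A)) :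
    closure (⋃ d : D, ⋂ f : F, (I d f : Set A)) =
      ⋂ f : F, closure (⋃ d : D, (I d f : Set A)) := by
  apply Set.Subset.antisymm
  · exact Set.subset_iInter fun f =>
      closure_mono (Set.iUnion_mono fun d => Set.iInter_subset _ f)
  · intro x hx
    simp only [Set.mem_iInter] at hx
    rw [Metric.mem_closure_iff]
    intro ε hε
    set n : ℕ := Fintype.card F with hn
    set ε' : ℝ := ε / (2 * (n + 1)) with hε'
    have hε'pos : 0 < ε' := by positivity
    classical
    have key : ∀ s : Finset F, ∃ y : A, ‖x - y‖ ≤ s.card * ε' ∧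
        (∀ f ∈ s, ∃ d, y ∈ I d f) ∧ (∀ f : F, y ∈ closure (⋃ d, (I d f : Set A))) := by
      intro s
      induction s using Finset.induction with
      | empty => exact ⟨x, by simp, by simp, hx⟩
      | @insert f₀ s hf₀s ih =>
        obtain ⟨y, h1, h2, h3⟩ := ih
        obtain ⟨u, ⟨du, hdu⟩, hnorm⟩ :=
          aux_approx (fun d => I d f₀) (fun d => hcl d f₀)
            (fun d d' h => hmono f₀ d d' h) (h3 f₀) hε'pos
        refine ⟨u * y, ?_, ?_, ?_⟩
        · have : ‖x - u * y‖ ≤ ‖x - y‖ + ‖y - u * y‖ := by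
            calc ‖x - u * y‖ = ‖(x - y) + (y - u * y)‖ := by rw [sub_add_sub_cancel]
              _ ≤ ‖x - y‖ + ‖y - u * y‖ := norm_add_le _ _
          rw [Finset.card_insert_of_notMem hf₀s]
          push_cast
          nlinarith
        · intro f hf
          rcases Finset.mem_insert.mp hf with rfl | hf
          · exact ⟨du, (I du f).mul_mem_right _ _ hdu⟩
          · obtain ⟨d, hd⟩ := h2 f hf
            exact ⟨d, (I d f).mul_mem_left _ _ hd⟩
        · intro f
          have hcont : Continuous fun w : A => u * w := continuous_const.mul continuous_id
          have himg : u * y ∈ (fun w : A => u * w) '' closure (⋃ d, (I d f : Set A)) :=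
            ⟨y, h3 f, rfl⟩
          have := image_closure_subset_closure_image hcont himg
          refine closure_mono ?_ this
          rintro b ⟨w, hw, rfl⟩
          obtain ⟨d, hd⟩ := Set.mem_iUnion.mp hw
          exact Set.mem_iUnion.mpr ⟨d, (I d f).mul_mem_left _ _ hd⟩
    obtain ⟨y, h1, h2, -⟩ := key Finset.univ
    choose dfun hdfun using fun f => h2 f (Finset.mem_univ f)
    obtain ⟨M, hM⟩ := Finset.exists_le (Finset.univ.image dfun)
    refine ⟨y, ?_, ?_⟩
    · refine Set.mem_iUnion.mpr ⟨M, Set.mem_iInter.mpr fun f => ?_⟩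
      exact hmono f (dfun f) M (hM _ (Finset.mem_image_of_mem dfun (Finset.mem_univ f))) (hdfun f)
    · rw [dist_eq_norm]
      have hcard : (Finset.univ : Finset F).card = n := rfl
      rw [hcard] at h1
      have : (n : ℝ) * ε' < ε := by
        rw [hε', mul_div_assoc', div_lt_iff₀ (by positivity)]
        nlinarith [Nat.cast_nonneg (α := ℝ) n]
      linarith
end

section
/- Let X be a locally compact Hausdorff space, (A_x)_{x ∈ X} a family of C*-algebras, and A ⊆ ∏ᵇ_{x ∈ X} A_x an admissible closed ⋆-subalgebra. Then for every a = (a_x)_{x ∈ X} ∈ A, the function x ↦ ‖a_x‖ vanishes at infinity: it tends to 0 along the cocompact filter of X, i.e. for every ε > 0 there is a compact subset K ⊆ X such that ‖a_x‖ < ε for all x ∈ X ∖ K. -/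
open scoped ZeroAtInfty ENNReal

/-- A closed ⋆-subalgebra `S` of the ℓ∞-product `∏ᵇ_{x ∈ X} A x = lp A ∞` is *admissible* if
it is closed, stable under pointwise multiplication by functions in `C₀(X, ℂ)`, and equal to
the closed linear span of all such pointwise products. -/
structure IsAdmissible {X : Type*} [TopologicalSpace X] {A : X → Type*}
    [∀ x, NonUnitalCStarAlgebra (A x)]
    (S : NonUnitalStarSubalgebra ℂ (lp A ∞)) : Prop where
  isClosed : IsClosed (S : Set (lp A ∞))
  smul_mem : ∀ f : C₀(X, ℂ), ∀ a ∈ S, ∃ b ∈ S, ∀ x, b x = f x • a x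
  eq_closure_span : (S : Set (lp A ∞)) =
    closure (Submodule.span ℂ
      {b : lp A ∞ | ∃ f : C₀(X, ℂ), ∃ a ∈ S, ∀ x, b x = f x • a x} : Set (lp A ∞))

open Filter Topology

lemma tendsto_norm_apply_of_mem_span
    {X : Type*} [TopologicalSpace X]
    {A : X → Type*} [∀ x, NonUnitalCStarAlgebra (A x)]
    (S : NonUnitalStarSubalgebra ℂ (lp A ∞)) (b : lp A ∞)
    (hb : b ∈ Submodule.span ℂ
      {b : lp A ∞ | ∃ f : C₀(X, ℂ), ∃ a ∈ S, ∀ x, b x = f x • a x}) :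
    Tendsto (fun x => ‖b x‖) (Filter.cocompact X) (𝓝 0) := by
  induction hb using Submodule.span_induction with
  | mem b hb =>
    obtain ⟨f, a, -, hfa⟩ := hb
    have hf : Tendsto (fun x => ‖f x‖ * ‖a‖) (Filter.cocompact X) (𝓝 0) := by
      have := (f.zero_at_infty').norm
      simpa using this.mul_const ‖a‖
    refine squeeze_zero (fun x => norm_nonneg _) (fun x => ?_) hf
    rw [hfa x, norm_smul]
    exact mul_le_mul_of_nonneg_left (lp.norm_apply_le_norm ENNReal.top_ne_zero a x)
      (norm_nonneg _)
  | zero => simpa using tendsto_const_nhds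
  | add b c _ _ hb hc =>
    have h := hb.add hc
    rw [add_zero] at h
    refine squeeze_zero (fun x => norm_nonneg _) (fun x => ?_) h
    simpa using norm_add_le (b x) (c x)
  | smul r b _ hb =>
    have h := hb.const_mul ‖r‖
    rw [mul_zero] at h
    refine squeeze_zero (fun x => norm_nonneg _) (fun x => ?_) h
    simp [norm_smul]

/-- If `X` is a locally compact Hausdorff space, `(A x)_{x ∈ X}` a family
of C*-algebras and `S` an admissible closed ⋆-subalgebra of `∏ᵇ_{x ∈ X} A x`, then for every
`a ∈ S` the function `x ↦ ‖a x‖` vanishes at infinity: for every `ε > 0` there is a compact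
`K ⊆ X` with `‖a x‖ < ε` for all `x ∈ X ∖ K`. -/
theorem norm_apply_zero_at_infty_of_isAdmissible
    {X : Type*} [TopologicalSpace X] [LocallyCompactSpace X] [T2Space X]
    {A : X → Type*} [∀ x, NonUnitalCStarAlgebra (A x)]
    (S : NonUnitalStarSubalgebra ℂ (lp A ∞)) (hS : IsAdmissible S) :
    ∀ a ∈ S, ∀ ε : ℝ, 0 < ε → ∃ K : Set X, IsCompact K ∧ ∀ x ∉ K, ‖a x‖ < ε := by
  intro a ha ε hε
  have ha' : a ∈ closure (Submodule.span ℂ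
      {b : lp A ∞ | ∃ f : C₀(X, ℂ), ∃ a ∈ S, ∀ x, b x = f x • a x} : Set (lp A ∞)) := by
    rw [← hS.eq_closure_span]; exact ha
  obtain ⟨c, hc, hac⟩ := Metric.mem_closure_iff.mp ha' (ε / 2) (by linarith)
  have hctend := tendsto_norm_apply_of_mem_span S c hc
  have hev : ∀ᶠ x in Filter.cocompact X, ‖c x‖ < ε / 2 := by
    have := hctend.eventually (eventually_lt_nhds (by linarith : (0:ℝ) < ε / 2))
    simpa using this
  obtain ⟨K, hK, hK'⟩ := Filter.hasBasis_cocompact.eventually_iff.mp hev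
  refine ⟨K, hK, fun x hx => ?_⟩
  have h1 : ‖a x - c x‖ ≤ ‖a - c‖ := by
    simpa using lp.norm_apply_le_norm ENNReal.top_ne_zero (a - c) x
  have h2 : ‖a - c‖ < ε / 2 := by rwa [dist_eq_norm] at hac
  calc ‖a x‖ = ‖(a x - c x) + c x‖ := by rw [sub_add_cancel]
    _ ≤ ‖a x - c x‖ + ‖c x‖ := norm_add_le _ _
    _ < ε / 2 + ε / 2 := add_lt_add_of_le_of_lt (h1.trans_lt h2).le (hK' hx)
    _ = ε := by linarith
end

section
/- Let X be a locally compact Hausdorff space, (A_x)_{x ∈ X} a family of C*-algebras, and A ⊆ ∏ᵇ_{x ∈ X} A_x an admissible closed ⋆-subalgebra. Then the following are equivalent: (1) for every x ∈ X, the evaluation π_x : A → A_x is surjective and its kernel equals A(X ∖ {x}); (2) for every x ∈ X the evaluation π_x : A → A_x is surjective, and for every a = (a_x)_x ∈ A the function x ↦ ‖a_x‖ is upper semicontinuous on X. -/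
open scoped ZeroAtInfty ENNReal

/-- For an open subset `U ⊆ X`, `localIdeal S U` is the ideal `A(U)`: the closed linear span
of the pointwise products `(f(x) • a x)_x` with `f ∈ C₀(X, ℂ)` vanishing on `X ∖ U` and
`a ∈ S`. -/
def localIdeal {X : Type*} [TopologicalSpace X] {A : X → Type*}
    [∀ x, NonUnitalCStarAlgebra (A x)]
    (S : NonUnitalStarSubalgebra ℂ (lp A ∞)) (U : Set X) : Set (lp A ∞) :=
  closure (Submodule.span ℂ
    {b : lp A ∞ | ∃ f : C₀(X, ℂ), (∀ x ∉ U, f x = 0) ∧ ∃ a ∈ S, ∀ x, b x = f x • a x}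
    : Set (lp A ∞))

section AbstractCStar

variable {B C : Type*} [NonUnitalCStarAlgebra B] [NonUnitalCStarAlgebra C]

lemma CStarProof.quasi_nonneg (b : B) : ∀ s ∈ quasispectrum ℝ (star b * b), 0 ≤ s := by
  intro s hs
  rw [Unitization.quasispectrum_eq_spectrum_inr' ℝ ℂ] at hs
  rw [Unitization.inr_mul, Unitization.inr_star] at hs
  exact spectrum_star_mul_self_nonneg s hs

lemma CStarProof.quasi_le_norm (b : B) :
    ∀ s ∈ quasispectrum ℝ (star b * b), s ≤ ‖star b * b‖ := by
  intro s hs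
  rw [Unitization.quasispectrum_eq_spectrum_inr' ℝ ℂ] at hs
  calc s ≤ ‖s‖ := le_abs_self s
  _ ≤ ‖((star b * b : B) : Unitization ℂ B)‖ := spectrum.norm_le_norm_of_mem hs
  _ = ‖star b * b‖ := Unitization.norm_inr _

/-- Key C⋆-algebraic approximation: if `‖φ a‖ ≤ t`, then `a` is within distance `t` of
the kernel of `φ`. -/
lemma CStarProof.exists_approx (φ : B →⋆ₙₐ[ℂ] C) (hφ : Continuous φ) (a : B) {t : ℝ}
    (ht : 0 < t) (hat : ‖φ a‖ ≤ t) : ∃ b : B, φ b = 0 ∧ ‖a - b‖ ≤ t := by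
  set c : B := star a * a with hc
  have hsa : IsSelfAdjoint c := IsSelfAdjoint.star_mul_self a
  have ht2 : (0:ℝ) < t ^ 2 := by positivity
  set k : ℝ → ℝ := fun s => 1 - t ^ 2 / max s (t ^ 2) with hkdef
  have hmax : ∀ s : ℝ, (0:ℝ) < max s (t ^ 2) := fun s => lt_of_lt_of_le ht2 (le_max_right _ _)
  have hk : Continuous k := by
    apply continuous_const.sub
    exact continuous_const.div (continuous_id.max continuous_const) fun s => (hmax s).ne'
  have hkC : ContinuousOn k (quasispectrum ℝ c) := hk.continuousOn
  have hkzero : ∀ s ≤ t ^ 2, k s = 0 := by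
    intro s hs
    simp only [hkdef]
    rw [max_eq_right hs, div_self ht2.ne']
    ring
  have hk0 : k 0 = 0 := hkzero 0 ht2.le
  set m : B := cfcₙ k c with hm
  have hm_sa : IsSelfAdjoint m := cfcₙ_predicate k c
  refine ⟨a * m, ?_, ?_⟩
  · have hφc : φ c = star (φ a) * φ a := by rw [hc, map_mul, map_star]
    have hφm : φ m = cfcₙ k (φ c) :=
      NonUnitalStarAlgHom.map_cfcₙ φ k c (hf := hkC) (hf₀ := hk0) (hφ := hφ)
        (ha := hsa) (hφa := hsa.map φ)
    have hker : cfcₙ k (φ c) = 0 := by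
      have : cfcₙ k (φ c) = cfcₙ (0 : ℝ → ℝ) (φ c) := by
        apply cfcₙ_congr
        intro s hs
        have hb : s ≤ ‖star (φ a) * (φ a)‖ := by
          apply CStarProof.quasi_le_norm (φ a)
          rwa [hφc] at hs
        have hst : s ≤ t ^ 2 := by
          refine hb.trans ?_
          rw [CStarRing.norm_star_mul_self]
          calc ‖φ a‖ * ‖φ a‖ ≤ t * t := mul_le_mul hat hat (norm_nonneg _) ht.le
          _ = t ^ 2 := by ring
        simpa using hkzero s hst
      rw [this, cfcₙ_zero]
    rw [map_mul, hφm, hker, mul_zero]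
  · set d : B := a - a * m with hd
    have hdd : star d * d = c - c * m - m * c + m * (c * m) := by
      simp only [hd, star_sub, star_mul, hm_sa.star_eq]
      simp only [mul_sub, sub_mul, mul_assoc, hc]
      abel
    have hidC : ContinuousOn (fun s : ℝ => s) (quasispectrum ℝ c) := continuousOn_id
    have h1 : cfcₙ (fun s : ℝ => s * k s) c = c * m := by
      rw [cfcₙ_mul _ _ c (hf := hidC) (hf0 := rfl) (hg := hkC) (hg0 := hk0), cfcₙ_id' ℝ c]
    have h2 : cfcₙ (fun s : ℝ => k s * s) c = m * c := by
      rw [cfcₙ_mul _ _ c (hf := hkC) (hf0 := hk0) (hg := hidC) (hg0 := rfl), cfcₙ_id' ℝ c]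
    have h3 : cfcₙ (fun s : ℝ => k s * (s * k s)) c = m * (c * m) := by
      rw [cfcₙ_mul k (fun s => s * k s) c (hf := hkC) (hf0 := hk0) (hg := hidC.mul hkC) (hg0 := by simp [hk0]),
        h1]
    have h4 : cfcₙ (fun s : ℝ => s - s * k s) c = c - c * m := by
      rw [cfcₙ_sub (fun s => s) (fun s => s * k s) c (hf := hidC) (hf0 := rfl) (hg := hidC.mul hkC) (hg0 := by simp [hk0]),
        cfcₙ_id' ℝ c, h1]
    have h5 : cfcₙ (fun s : ℝ => s - s * k s - k s * s) c = c - c * m - m * c := by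
      rw [cfcₙ_sub (fun s => s - s * k s) (fun s => k s * s) c (hf := hidC.sub (hidC.mul hkC)) (hf0 := by simp [hk0])
        (hg := hkC.mul hidC) (hg0 := by simp [hk0]), h4, h2]
    have h6 : cfcₙ (fun s : ℝ => s - s * k s - k s * s + k s * (s * k s)) c
        = c - c * m - m * c + m * (c * m) := by
      rw [cfcₙ_add (fun s => s - s * k s - k s * s) (fun s => k s * (s * k s)) c (hf := (hidC.sub (hidC.mul hkC)).sub (hkC.mul hidC))
        (hf0 := by simp [hk0]) (hg := hkC.mul (hidC.mul hkC)) (hg0 := by simp [hk0]), h5, h3]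
    have hnorm : ‖star d * d‖ ≤ t ^ 2 := by
      rw [hdd, ← h6]
      apply norm_cfcₙ_le
      intro s hs
      have hs0 : 0 ≤ s := CStarProof.quasi_nonneg a s hs
      have hval : s - s * k s - k s * s + k s * (s * k s) = s * (1 - k s) ^ 2 := by ring
      rw [hval]
      rcases le_or_gt s (t ^ 2) with h | h
      · rw [hkzero s h]
        simpa [Real.norm_of_nonneg hs0] using h
      · have hmaxs : max s (t ^ 2) = s := max_eq_left h.le
        have hks : (1 : ℝ) - k s = t ^ 2 / s := by
          simp only [hkdef, hmaxs]; ring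
        rw [hks]
        have hs' : (0:ℝ) < s := ht2.trans h
        have hexp : s * (t ^ 2 / s) ^ 2 = t ^ 2 * (t ^ 2 / s) := by
          field_simp
        rw [hexp, Real.norm_of_nonneg (by positivity)]
        calc t ^ 2 * (t ^ 2 / s) ≤ t ^ 2 * 1 := by
              apply mul_le_mul_of_nonneg_left _ ht2.le
              rw [div_le_one hs']
              exact h.le
        _ = t ^ 2 := mul_one _
    have hsq : ‖d‖ * ‖d‖ ≤ t * t := by
      rw [← CStarRing.norm_star_mul_self]
      calc ‖star d * d‖ ≤ t ^ 2 := hnorm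
      _ = t * t := sq t
    have hdn : ‖d‖ ≤ t := by nlinarith [norm_nonneg d]
    simpa [hd] using hdn

end AbstractCStar

section Aux

variable {X : Type*} [TopologicalSpace X] {A : X → Type*} [∀ x, NonUnitalCStarAlgebra (A x)]

/-- Evaluation at a point as a non-unital star algebra homomorphism. -/
def CStarProof.evalHom (x : X) : lp A ∞ →⋆ₙₐ[ℂ] A x where
  toFun a := a x
  map_add' a b := congrFun (lp.coeFn_add a b) x
  map_zero' := rfl
  map_mul' a b := congrFun (lp.infty_coeFn_mul a b) x
  map_smul' c a := congrFun (lp.coeFn_smul c a) x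
  map_star' a := congrFun (lp.coeFn_star a) x

lemma CStarProof.evalHom_continuous (x : X) : Continuous (CStarProof.evalHom (A := A) x) := by
  refine AddMonoidHomClass.continuous_of_bound (CStarProof.evalHom x) 1 fun a => ?_
  rw [one_mul]; exact lp.norm_apply_le_norm ENNReal.top_ne_zero a x

lemma CStarProof.apply_sub (a b : lp A ∞) (x : X) : (a - b) x = a x - b x :=
  congrFun (lp.coeFn_sub a b) x

variable (S : NonUnitalStarSubalgebra ℂ (lp A ∞))

/-- Membership in a local ideal forces vanishing at the corresponding point. -/
lemma CStarProof.apply_eq_zero_of_mem_localIdeal {x : X} {a : lp A ∞}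
    (ha : a ∈ localIdeal S ({x}ᶜ : Set X)) : a x = 0 := by
  have hcl : IsClosed {b : lp A ∞ | b x = 0} := by
    have : {b : lp A ∞ | b x = 0} = (CStarProof.evalHom (A := A) x) ⁻¹' {0} := rfl
    rw [this]
    exact isClosed_singleton.preimage (CStarProof.evalHom_continuous x)
  have hsub : (Submodule.span ℂ
      {b : lp A ∞ | ∃ f : C₀(X, ℂ), (∀ y ∉ ({x}ᶜ : Set X), f y = 0) ∧
        ∃ a ∈ S, ∀ y, b y = f y • a y} : Set (lp A ∞)) ⊆ {b : lp A ∞ | b x = 0} := by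
    intro s hs
    induction hs using Submodule.span_induction with
    | mem b hb =>
      obtain ⟨f, hf, a', _, hb⟩ := hb
      have hfx : f x = 0 := hf x (by simp)
      simp [Set.mem_setOf_eq, hb x, hfx]
    | zero => rfl
    | add b c _ _ hb hc =>
      show (b + c) x = 0
      rw [congrFun (lp.coeFn_add b c) x]
      simp only [Pi.add_apply]
      rw [hb, hc, add_zero]
    | smul z b _ hb =>
      show (z • b) x = 0
      rw [congrFun (lp.coeFn_smul z b) x]
      simp only [Pi.smul_apply]
      rw [hb, smul_zero]
  exact closure_minimal hsub hcl ha

/-- Elements of the relevant spans are dominated by nonnegative `C₀` functions vanishing off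
`U`. -/
lemma CStarProof.span_dominate {U : Set X} {s : lp A ∞}
    (hs : s ∈ Submodule.span ℂ
      {b : lp A ∞ | ∃ f : C₀(X, ℂ), (∀ y ∉ U, f y = 0) ∧ ∃ a ∈ S, ∀ y, b y = f y • a y}) :
    ∃ g : C₀(X, ℝ), (∀ y, ‖s y‖ ≤ g y) ∧ ∀ y ∉ U, g y = 0 := by
  induction hs using Submodule.span_induction with
  | mem b hb =>
    obtain ⟨f, hf, a, _, hb⟩ := hb
    refine ⟨⟨⟨fun y => ‖f y‖ * ‖a‖, ((map_continuous f).norm.mul continuous_const)⟩, ?_⟩,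
      fun y => ?_, fun y hy => ?_⟩
    · have := (zero_at_infty f).norm
      simpa using this.mul_const ‖a‖
    · rw [hb y, norm_smul]
      exact mul_le_mul_of_nonneg_left (lp.norm_apply_le_norm ENNReal.top_ne_zero a y)
        (norm_nonneg _)
    · simp [hf y hy]
  | zero => exact ⟨0, fun y => by simp, fun y _ => rfl⟩
  | add b c _ _ hb hc =>
    obtain ⟨g₁, hg₁, hg₁0⟩ := hb
    obtain ⟨g₂, hg₂, hg₂0⟩ := hc
    refine ⟨g₁ + g₂, fun y => ?_, fun y hy => ?_⟩
    · rw [congrFun (lp.coeFn_add b c) y]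
      simp only [Pi.add_apply, ZeroAtInftyContinuousMap.coe_add]
      exact (norm_add_le _ _).trans (add_le_add (hg₁ y) (hg₂ y))
    · simp [hg₁0 y hy, hg₂0 y hy]
  | smul z b _ hb =>
    obtain ⟨g, hg, hg0⟩ := hb
    refine ⟨‖z‖ • g, fun y => ?_, fun y hy => ?_⟩
    · rw [congrFun (lp.coeFn_smul z b) y]
      simp only [Pi.smul_apply, ZeroAtInftyContinuousMap.coe_smul, norm_smul]
      exact mul_le_mul_of_nonneg_left (hg y) (norm_nonneg _)
    · simp [hg0 y hy]

/-- The set where the same two span sets coincide. -/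
lemma CStarProof.univ_span_set_eq :
    {b : lp A ∞ | ∃ f : C₀(X, ℂ), ∃ a ∈ S, ∀ y, b y = f y • a y} =
    {b : lp A ∞ | ∃ f : C₀(X, ℂ), (∀ y ∉ (Set.univ : Set X), f y = 0) ∧
      ∃ a ∈ S, ∀ y, b y = f y • a y} := by
  ext b
  constructor
  · rintro ⟨f, a, ha, hb⟩
    exact ⟨f, fun y hy => absurd (Set.mem_univ y) hy, a, ha, hb⟩
  · rintro ⟨f, _, a, ha, hb⟩
    exact ⟨f, a, ha, hb⟩

/-- Norm functions of elements of an admissible subalgebra vanish at infinity. -/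
lemma CStarProof.norm_vanish (hS : IsAdmissible S) {a : lp A ∞} (ha : a ∈ S) {ε : ℝ}
    (hε : 0 < ε) : ∃ K : Set X, IsCompact K ∧ ∀ y ∉ K, ‖a y‖ < ε := by
  have hmem : a ∈ closure (Submodule.span ℂ
      {b : lp A ∞ | ∃ f : C₀(X, ℂ), (∀ y ∉ (Set.univ : Set X), f y = 0) ∧
        ∃ a ∈ S, ∀ y, b y = f y • a y} : Set (lp A ∞)) := by
    rw [← CStarProof.univ_span_set_eq, ← hS.eq_closure_span]
    exact ha
  obtain ⟨s, hsmem, hdist⟩ := Metric.mem_closure_iff.mp hmem (ε / 2) (by positivity)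
  obtain ⟨g, hg, -⟩ := CStarProof.span_dominate S hsmem
  obtain ⟨K₀, hK₀, hK₀sub⟩ := Filter.mem_cocompact.mp
    (Filter.Tendsto.eventually_lt (zero_at_infty g) tendsto_const_nhds (half_pos hε) :
      {y : X | g y < ε / 2} ∈ Filter.cocompact X)
  refine ⟨K₀, hK₀, fun y hy => ?_⟩
  have hgy : g y < ε / 2 := hK₀sub hy
  have h1 : ‖a y - s y‖ ≤ ‖a - s‖ := by
    rw [← CStarProof.apply_sub a s y]
    exact lp.norm_apply_le_norm ENNReal.top_ne_zero (a - s) y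
  have h2 : ‖a - s‖ < ε / 2 := by rwa [← dist_eq_norm]
  calc ‖a y‖ ≤ ‖a y - s y‖ + ‖s y‖ := by
        simpa using norm_add_le (a y - s y) (s y)
  _ < ε / 2 + ε / 2 := by
        apply add_lt_add_of_lt_of_le (h1.trans_lt h2)
        exact (hg y).trans hgy.le |>.trans (le_refl _) |>.trans (le_refl _)
  _ = ε := add_halves ε

/-- If norms are upper semicontinuous and `a x = 0`, then `a ∈ A(X ∖ {x})`. -/
lemma CStarProof.mem_localIdeal_of_apply_eq_zero (hS : IsAdmissible S) {a : lp A ∞}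
    (ha : a ∈ S) (hU : UpperSemicontinuous fun y => ‖a y‖) {x : X} (hax : a x = 0)
    [LocallyCompactSpace X] [T2Space X] : a ∈ localIdeal S ({x}ᶜ : Set X) := by
  rw [localIdeal, Metric.mem_closure_iff]
  intro ε hε
  set ε' := ε / 2 with hε'
  have hε'pos : 0 < ε' := by positivity
  obtain ⟨K₀, hK₀, hK₀out⟩ := CStarProof.norm_vanish S hS ha hε'pos
  set K : Set X := {y | ε' ≤ ‖a y‖} with hK
  have hKclosed : IsClosed K := by
    have : K = ((fun y => ‖a y‖) ⁻¹' Set.Iio ε')ᶜ := by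
      ext y; simp [hK, not_lt]
    rw [this]
    exact (upperSemicontinuous_iff_isOpen_preimage.mp hU ε').isClosed_compl
  have hKcompact : IsCompact K := by
    apply hK₀.of_isClosed_subset hKclosed
    intro y hy
    by_contra hyK₀
    exact absurd (hK₀out y hyK₀) (not_lt.mpr hy)
  have hxK : x ∉ K := by
    simp only [hK, Set.mem_setOf_eq, hax, norm_zero, not_le]
    exact hε'pos
  obtain ⟨f, hf1, hf0, hfc, hf01⟩ := exists_continuous_one_zero_of_isCompact hKcompact
    isClosed_singleton (Set.disjoint_singleton_right.mpr hxK)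
  set fC : C₀(X, ℂ) :=
    ⟨⟨fun y => (f y : ℂ), Complex.continuous_ofReal.comp (map_continuous f)⟩,
      (hfc.comp_left (g := Complex.ofReal) Complex.ofReal_zero).is_zero_at_infty⟩ with hfC
  obtain ⟨b, hbS, hb⟩ := hS.smul_mem fC a ha
  have hbmem : b ∈ (Submodule.span ℂ
      {c : lp A ∞ | ∃ f : C₀(X, ℂ), (∀ y ∉ ({x}ᶜ : Set X), f y = 0) ∧
        ∃ a ∈ S, ∀ y, c y = f y • a y} : Set (lp A ∞)) := by
    apply Submodule.subset_span
    refine ⟨fC, fun y hy => ?_, a, ha, hb⟩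
    have : y = x := by simpa using hy
    subst this
    simp [hfC, hf0 rfl]
  refine ⟨b, hbmem, ?_⟩
  rw [dist_eq_norm]
  have hbound : ‖a - b‖ ≤ ε' := by
    apply lp.norm_le_of_forall_le hε'pos.le
    intro y
    rw [CStarProof.apply_sub a b y, hb y]
    have hrw : a y - fC y • a y = ((1 : ℂ) - fC y) • a y := by
      rw [sub_smul, one_smul]
    rw [hrw, norm_smul]
    rcases le_or_gt ε' ‖a y‖ with hy | hy
    · have : f y = 1 := hf1 hy
      simp only [hfC, this, ZeroAtInftyContinuousMap.coe_mk, ContinuousMap.coe_mk,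
        Complex.ofReal_one, sub_self, norm_zero, zero_mul]
      exact hε'pos.le
    · have hf' : ‖(1 : ℂ) - fC y‖ ≤ 1 := by
        have : ((1 : ℂ) - fC y) = ((1 - f y : ℝ) : ℂ) := by
          simp [hfC]
        rw [this, Complex.norm_real, Real.norm_eq_abs, abs_le]
        have := hf01 y
        constructor <;> [linarith [this.2]; linarith [this.1]]
      calc ‖(1 : ℂ) - fC y‖ * ‖a y‖ ≤ 1 * ε' :=
            mul_le_mul hf' hy.le (norm_nonneg _) zero_le_one
      _ = ε' := one_mul _
  calc ‖a - b‖ ≤ ε' := hbound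
  _ < ε := by rw [hε']; linarith

end Aux

/-- For an admissible closed ⋆-subalgebra `S ⊆ ∏ᵇ_{x ∈ X} A x` over a
locally compact Hausdorff space `X`, the following are equivalent: (1) every evaluation
`π_x : S → A x` is surjective with kernel `A(X ∖ {x})`; (2) every evaluation is surjective and
for every `a ∈ S` the function `x ↦ ‖a x‖` is upper semicontinuous. -/
theorem fiberwise_kernel_iff_upperSemicontinuous
    {X : Type*} [TopologicalSpace X] [LocallyCompactSpace X] [T2Space X]
    {A : X → Type*} [∀ x, NonUnitalCStarAlgebra (A x)]
    (S : NonUnitalStarSubalgebra ℂ (lp A ∞)) (hS : IsAdmissible S) :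
    ((∀ (x : X) (c : A x), ∃ a ∈ S, a x = c) ∧
       ∀ (x : X), ∀ a ∈ S, (a x = 0 ↔ a ∈ localIdeal S ({x}ᶜ : Set X))) ↔
    ((∀ (x : X) (c : A x), ∃ a ∈ S, a x = c) ∧
       ∀ a ∈ S, UpperSemicontinuous fun x => ‖a x‖) := by
  haveI : IsClosed (S : Set (lp A ∞)) := hS.isClosed
  constructor
  · rintro ⟨hsurj, hker⟩
    refine ⟨hsurj, fun a ha x => ?_⟩
    -- upper semicontinuity at `x`
    intro r hr
    simp only at hr
    set ε : ℝ := (r - ‖a x‖) / 3 with hεdef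
    have hε : 0 < ε := by
      rw [hεdef]
      linarith
    -- use the abstract approximation lemma in the C⋆-algebra ↥S
    set φ : ↥S →⋆ₙₐ[ℂ] A x :=
      (CStarProof.evalHom x).comp (NonUnitalStarSubalgebraClass.subtype S) with hφdef
    have hφcont : Continuous φ := (CStarProof.evalHom_continuous x).comp continuous_subtype_val
    have ht : (0:ℝ) < ‖a x‖ + ε := by positivity
    have hat : ‖φ ⟨a, ha⟩‖ ≤ ‖a x‖ + ε := by
      have : φ ⟨a, ha⟩ = a x := rfl
      rw [this]; linarith
    obtain ⟨b', hb'0, hb'n⟩ := CStarProof.exists_approx φ hφcont ⟨a, ha⟩ ht hat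
    have hb'x : (b' : lp A ∞) x = 0 := hb'0
    have hb'I : (b' : lp A ∞) ∈ localIdeal S ({x}ᶜ : Set X) :=
      (hker x b' b'.2).mp hb'x
    have hab' : ‖a - (b' : lp A ∞)‖ ≤ ‖a x‖ + ε := hb'n
    -- approximate b' by a span element with dominating C₀ function vanishing at x
    obtain ⟨s, hsmem, hsdist⟩ := Metric.mem_closure_iff.mp hb'I ε hε
    obtain ⟨g, hg, hg0⟩ := CStarProof.span_dominate S hsmem
    have hgx : g x = 0 := hg0 x (by simp)
    have hV : {y | g y < ε} ∈ nhds x := by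
      have : IsOpen {y : X | g y < ε} := isOpen_lt (map_continuous g) continuous_const
      exact this.mem_nhds (by simpa [hgx] using hε)
    refine Filter.eventually_iff_exists_mem.mpr ⟨{y | g y < ε}, hV, fun y hy => ?_⟩
    have h1 : ‖a y - (b' : lp A ∞) y‖ ≤ ‖a x‖ + ε := by
      rw [← CStarProof.apply_sub a _ y]
      exact (lp.norm_apply_le_norm ENNReal.top_ne_zero _ y).trans hab'
    have h2 : ‖(b' : lp A ∞) y - s y‖ < ε := by
      rw [← CStarProof.apply_sub _ s y]
      refine lt_of_le_of_lt (lp.norm_apply_le_norm ENNReal.top_ne_zero _ y) ?_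
      rwa [← dist_eq_norm]
    have h3 : ‖s y‖ < ε := lt_of_le_of_lt (hg y) hy
    calc ‖a y‖ ≤ ‖a y - (b' : lp A ∞) y‖ + ‖(b' : lp A ∞) y - s y‖ + ‖s y‖ := by
          have := norm_add₃_le (a := a y - (b' : lp A ∞) y) (b := (b' : lp A ∞) y - s y)
            (c := s y)
          simpa using this
    _ < (‖a x‖ + ε) + ε + ε := by
          apply add_lt_add_of_lt_of_lt
          · exact add_lt_add_of_le_of_lt h1 h2
          · exact h3
    _ = r := by rw [hεdef]; ring
  · rintro ⟨hsurj, husc⟩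
    refine ⟨hsurj, fun x a ha => ⟨fun hax => ?_, fun hmem => ?_⟩⟩
    · exact CStarProof.mem_localIdeal_of_apply_eq_zero S hS ha (husc a ha) hax
    · exact CStarProof.apply_eq_zero_of_mem_localIdeal S hmem
end

section
/- Let X be a locally compact Hausdorff space, (A_x)_{x ∈ X} a family of C*-algebras, and let A ⊆ A' be two admissible closed ⋆-subalgebras of ∏ᵇ_{x ∈ X} A_x such that both A and A' satisfy: all evaluations π_x (restricted to the respective subalgebra) are surjective onto A_x, and for every element a of the subalgebra the function x ↦ ‖a_x‖ is upper semicontinuous. Then A = A'. -/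
open scoped ZeroAtInfty ENNReal

/-- Let `X` be locally compact Hausdorff, `(A x)_{x ∈ X}` a family of
C*-algebras and `S ⊆ S'` two admissible closed ⋆-subalgebras of `∏ᵇ_{x ∈ X} A x` such that
for both subalgebras all evaluations are surjective onto `A x` and all functions
`x ↦ ‖a x‖` (for `a` in the subalgebra) are upper semicontinuous.  Then `S = S'`. -/
theorem eq_of_le_of_isAdmissible
    {X : Type*} [TopologicalSpace X] [LocallyCompactSpace X] [T2Space X]
    {A : X → Type*} [∀ x, NonUnitalCStarAlgebra (A x)]
    (S S' : NonUnitalStarSubalgebra ℂ (lp A ∞))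
    (hS : IsAdmissible S) (hS' : IsAdmissible S') (hle : S ≤ S')
    (hsurj : ∀ (x : X) (c : A x), ∃ a ∈ S, a x = c)
    (husc : ∀ a ∈ S, UpperSemicontinuous fun x => ‖a x‖)
    (hsurj' : ∀ (x : X) (c : A x), ∃ a ∈ S', a x = c)
    (husc' : ∀ a ∈ S', UpperSemicontinuous fun x => ‖a x‖) :
    S = S' := by
  refine le_antisymm hle ?_
  -- Key claim: every "generator" of `S'` lies in `S`.
  have key : ∀ f : C₀(X, ℂ), ∀ a' ∈ S', ∀ c : lp A ∞,
      (∀ x, c x = f x • a' x) → c ∈ S := by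
    intro f a' ha' c hc
    -- `c` itself belongs to `S'`.
    have hcS' : c ∈ S' := by
      obtain ⟨c', hc'S, hc'⟩ := hS'.smul_mem f a' ha'
      have : c = c' := lp.ext (funext fun y => by rw [hc, hc'])
      rwa [this]
    have hclosed := hS.isClosed.closure_eq
    rw [← SetLike.mem_coe, ← hclosed, Metric.mem_closure_iff]
    intro ε hε
    obtain ⟨δ, hδpos, hδ⟩ : ∃ δ > 0, 2 * δ < ε := ⟨ε / 3, by positivity, by linarith⟩
    set M : ℝ := ‖a'‖ + 1 with hM
    have hMpos : 0 < M := by positivity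
    -- a compact set outside of which ‖f y‖ is small
    have hsmall : {y : X | ‖f y‖ < δ / M} ∈ Filter.cocompact X := by
      have h0 := f.zero_at_infty' (Metric.ball_mem_nhds (0 : ℂ) (by positivity : (0:ℝ) < δ / M))
      filter_upwards [h0] with y hy
      simpa [dist_eq_norm] using hy
    obtain ⟨K, hKc, hKsub⟩ := Filter.mem_cocompact.mp hsmall
    -- for every point, an element of `S` matching `c` at that point
    have hbx : ∀ x : X, ∃ b ∈ S, (c - b) x = 0 := by
      intro x
      obtain ⟨a, haS, hax⟩ := hsurj x (a' x)
      obtain ⟨b, hbS, hb⟩ := hS.smul_mem f a haS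
      refine ⟨b, hbS, ?_⟩
      have : (c - b) x = c x - b x := by rw [lp.coeFn_sub]; rfl
      rw [this, hc, hb, hax, sub_self]
    choose bb hbbS hbb0 using hbx
    -- open neighbourhoods where the approximation is within δ
    have hUx : ∀ x : X, ∃ U : Set X, IsOpen U ∧ x ∈ U ∧
        ∀ y ∈ U, ‖(c - bb x) y‖ < δ := by
      intro x
      have hmem : c - bb x ∈ S' := sub_mem hcS' (hle (hbbS x))
      have husc2 := husc' (c - bb x) hmem x
      have h0 : ‖(c - bb x) x‖ < δ := by rw [hbb0 x, norm_zero]; exact hδpos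
      have hev : ∀ᶠ y in nhds x, ‖(c - bb x) y‖ < δ := husc2 δ h0
      obtain ⟨U, hU1, hU2, hU3⟩ := eventually_nhds_iff.mp hev
      exact ⟨U, hU2, hU3, hU1⟩
    choose U hUo hxU hUsmall using hUx
    -- finite subcover of K
    obtain ⟨t, -, hKt⟩ := hKc.elim_nhds_subcover U fun x _ => (hUo x).mem_nhds (hxU x)
    set n := t.card with hn
    set e : Fin n → X := fun i => (t.equivFin.symm i : X) with he
    have hcov : K ⊆ ⋃ i : Fin n, U (e i) := by
      intro y hy
      obtain ⟨x, hx⟩ := Set.mem_iUnion₂.mp (hKt hy)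
      refine Set.mem_iUnion.mpr ⟨t.equivFin ⟨x, hx.1⟩, ?_⟩
      have : e (t.equivFin ⟨x, hx.1⟩) = x := by
        simp [he]
      rw [this]; exact hx.2
    -- partition of unity subordinate to the cover
    obtain ⟨p, hpsub, hpcp⟩ :=
      PartitionOfUnity.exists_isSubordinate_of_locallyFinite_t2space hKc
        (fun i : Fin n => U (e i)) (fun i => hUo (e i))
        (locallyFinite_of_finite _) hcov
    -- complexified partition functions, as elements of C₀(X, ℂ)
    let φ : Fin n → C₀(X, ℂ) := fun i =>
      { toFun := fun y => ((p i y : ℝ) : ℂ)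
        continuous_toFun := Complex.continuous_ofReal.comp (p i).continuous
        zero_at_infty' :=
          ((hpcp i).comp_left (g := Complex.ofReal) Complex.ofReal_zero).is_zero_at_infty }
    have hd : ∀ i : Fin n, ∃ dI ∈ S, ∀ y, dI y = ((p i y : ℝ) : ℂ) • bb (e i) y :=
      fun i => hS.smul_mem (φ i) (bb (e i)) (hbbS (e i))
    choose d hdS hdy using hd
    refine ⟨∑ i : Fin n, d i, sum_mem fun i _ => hdS i, ?_⟩
    rw [dist_eq_norm]
    have hbound : ‖c - ∑ i : Fin n, d i‖ ≤ 2 * δ := by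
      apply lp.norm_le_of_forall_le (by positivity)
      intro y
      have happly : (c - ∑ i : Fin n, d i) y = c y - ∑ i : Fin n, d i y := by
        rw [lp.coeFn_sub, lp.coeFn_sum]; simp [Finset.sum_apply]
      set σ : ℝ := ∑ i : Fin n, p i y with hσ
      have hσ_nonneg : 0 ≤ σ := Finset.sum_nonneg fun i _ => p.nonneg i y
      have hσ_le_one : σ ≤ 1 := by
        have := p.sum_le_one' y
        rwa [finsum_eq_sum_of_fintype] at this
      have hexpand : c y - ∑ i : Fin n, d i y =
          (∑ i : Fin n, ((p i y : ℝ) : ℂ) • ((c - bb (e i)) y)) +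
            ((1 - σ : ℝ) : ℂ) • c y := by
        have h1 : ∀ i : Fin n, ((p i y : ℝ) : ℂ) • ((c - bb (e i)) y)
            = ((p i y : ℝ) : ℂ) • c y - d i y := by
          intro i
          have : (c - bb (e i)) y = c y - bb (e i) y := by rw [lp.coeFn_sub]; rfl
          rw [this, smul_sub, hdy]
        rw [Finset.sum_congr rfl fun i _ => h1 i, Finset.sum_sub_distrib,
          ← Finset.sum_smul]
        have h2 : (∑ i : Fin n, ((p i y : ℝ) : ℂ)) = ((σ : ℝ) : ℂ) := by
          rw [hσ]; push_cast; ring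
        rw [h2]
        push_cast
        rw [sub_smul, one_smul]
        abel
      rw [happly, hexpand]
      have hterm : ∀ i : Fin n,
          ‖((p i y : ℝ) : ℂ) • ((c - bb (e i)) y)‖ ≤ p i y * δ := by
        intro i
        rw [norm_smul, Complex.norm_real, Real.norm_eq_abs,
          abs_of_nonneg (p.nonneg i y)]
        by_cases hzero : p i y = 0
        · rw [hzero]; simp
        · have hyU : y ∈ U (e i) := hpsub i (subset_tsupport _ hzero)
          exact mul_le_mul_of_nonneg_left (le_of_lt (hUsmall (e i) y hyU))
            (p.nonneg i y)
      have hsum1 : ‖∑ i : Fin n, ((p i y : ℝ) : ℂ) • ((c - bb (e i)) y)‖ ≤ δ := by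
        refine (norm_sum_le _ _).trans ?_
        calc (∑ i : Fin n, ‖((p i y : ℝ) : ℂ) • ((c - bb (e i)) y)‖)
            ≤ ∑ i : Fin n, p i y * δ := Finset.sum_le_sum fun i _ => hterm i
          _ = σ * δ := by rw [hσ, Finset.sum_mul]
          _ ≤ 1 * δ := mul_le_mul_of_nonneg_right hσ_le_one (le_of_lt hδpos)
          _ = δ := one_mul δ
      have hsum2 : ‖((1 - σ : ℝ) : ℂ) • c y‖ ≤ δ := by
        rw [norm_smul, Complex.norm_real, Real.norm_eq_abs,
          abs_of_nonneg (by linarith : (0:ℝ) ≤ 1 - σ)]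
        by_cases hyK : y ∈ K
        · have : σ = 1 := by
            have := p.sum_eq_one' y hyK
            rwa [finsum_eq_sum_of_fintype] at this
          rw [this]; simp [le_of_lt hδpos]
        · have hfy : ‖f y‖ < δ / M := hKsub hyK
          have hcy : ‖c y‖ ≤ ‖f y‖ * ‖a' y‖ := by
            rw [hc]; exact (norm_smul _ _).le
          have hay : ‖a' y‖ ≤ ‖a'‖ := lp.norm_apply_le_norm ENNReal.top_ne_zero a' y
          have hay' : ‖a' y‖ ≤ M := by rw [hM]; linarith
          have h1σ : 1 - σ ≤ 1 := by linarith
          have hcy2 : ‖c y‖ ≤ δ := by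
            calc ‖c y‖ ≤ ‖f y‖ * ‖a' y‖ := hcy
              _ ≤ (δ / M) * M := by
                  apply mul_le_mul (le_of_lt hfy) hay' (norm_nonneg _)
                  positivity
              _ = δ := by field_simp
          calc (1 - σ) * ‖c y‖ ≤ 1 * ‖c y‖ :=
                mul_le_mul_of_nonneg_right h1σ (norm_nonneg _)
            _ = ‖c y‖ := one_mul _
            _ ≤ δ := hcy2
      calc ‖(∑ i : Fin n, ((p i y : ℝ) : ℂ) • ((c - bb (e i)) y)) +
              ((1 - σ : ℝ) : ℂ) • c y‖
          ≤ ‖∑ i : Fin n, ((p i y : ℝ) : ℂ) • ((c - bb (e i)) y)‖ +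
              ‖((1 - σ : ℝ) : ℂ) • c y‖ := norm_add_le _ _
        _ ≤ δ + δ := add_le_add hsum1 hsum2
        _ = 2 * δ := by ring
    exact lt_of_le_of_lt hbound hδ
  -- Conclude: S' ⊆ S.
  intro a' ha'
  have ha'cl : (a' : lp A ∞) ∈
      closure (Submodule.span ℂ
        {b : lp A ∞ | ∃ f : C₀(X, ℂ), ∃ a ∈ S', ∀ x, b x = f x • a x} :
          Set (lp A ∞)) := by
    rw [← hS'.eq_closure_span]; exact ha'
  have hgen : {b : lp A ∞ | ∃ f : C₀(X, ℂ), ∃ a ∈ S', ∀ x, b x = f x • a x} ⊆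
      (S.toNonUnitalSubalgebra.toSubmodule : Set (lp A ∞)) := by
    rintro b ⟨f, a, haS', hb⟩
    exact key f a haS' b hb
  have hspan := Submodule.span_le.mpr hgen
  have hsub : (Submodule.span ℂ
      {b : lp A ∞ | ∃ f : C₀(X, ℂ), ∃ a ∈ S', ∀ x, b x = f x • a x} :
        Set (lp A ∞)) ⊆ (S : Set (lp A ∞)) := hspan
  have := closure_minimal hsub hS.isClosed ha'cl
  exact this
end

section
/- Let X be a locally compact Hausdorff space, A a C*-algebra, and Φ a monotone map from the open subsets of X to the closed two-sided ideals of A such that for every x ∈ X, Φ(X ∖ {x}) equals the norm closure of the union of the ideals Φ(U) over all open U ⊆ X whose closure is compact and contained in X ∖ {x}. In the C*-algebra C₀(X, A), let I := {φ ∈ C₀(X, A) : φ(x) ∈ Φ(X ∖ {x}) for every x ∈ X}, and let J be the smallest closed two-sided ideal of C₀(X, A) containing every function of the form x ↦ f(x)·a, where U, V ⊆ X are disjoint open sets, f ∈ C₀(X) vanishes on X ∖ U, and a ∈ Φ(V). Then I = J. -/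
open scoped ZeroAtInfty

section Helpers

variable {A : Type*} [NonUnitalCStarAlgebra A]

/-- Any continuous functional calculus element of a selfadjoint `b` lies in the closure of the
non-unital star subalgebra generated by `b`. -/
lemma cfcn_mem_closure_adjoin (b : A) (hb : IsSelfAdjoint b) (g : ℝ → ℝ)
    (hg : ContinuousOn g (quasispectrum ℝ b)) (hg0 : g 0 = 0) :
    cfcₙ g b ∈ closure (NonUnitalStarAlgebra.adjoin ℝ {b} : Set A) := by
  rw [cfcₙ_apply g b hg hg0 hb]
  have h0 : ((0 : quasispectrum ℝ b) : ℝ) = 0 := rfl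
  have hdense := ContinuousMapZero.adjoin_id_dense (𝕜 := ℝ) (quasispectrum ℝ b)
  have hmem : (⟨⟨_, hg.restrict⟩, hg0⟩ : ContinuousMapZero (quasispectrum ℝ b) ℝ) ∈
      closure (NonUnitalStarAlgebra.adjoin ℝ {(ContinuousMapZero.id (quasispectrum ℝ b))} :
        Set (ContinuousMapZero (quasispectrum ℝ b) ℝ)) := hdense _
  have hcont : Continuous (cfcₙHom hb (R := ℝ)) := (cfcₙHom_isClosedEmbedding hb).continuous
  have := (image_closure_subset_closure_image hcont) (Set.mem_image_of_mem _ hmem)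
  refine closure_mono ?_ this
  rintro - ⟨x, hx, rfl⟩
  have : cfcₙHom hb x ∈ (NonUnitalStarSubalgebra.map (cfcₙHom hb)
      (NonUnitalStarAlgebra.adjoin ℝ {(ContinuousMapZero.id (quasispectrum ℝ b))})) := ⟨x, hx, rfl⟩
  have hid : cfcₙHom hb (ContinuousMapZero.id (quasispectrum ℝ b)) = b := cfcₙHom_id hb
  rwa [NonUnitalStarAlgHom.map_adjoin_singleton, hid] at this

/-- The adjoin of `star a * a` has all real multiples inside a two-sided ideal containing `a`. -/
lemma adjoin_star_mul_self_subset (I : TwoSidedIdeal A) {a : A} (ha : a ∈ I) :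
    ∀ x ∈ NonUnitalStarAlgebra.adjoin ℝ ({star a * a} : Set A), ∀ r : ℝ,
      r • x ∈ I ∧ r • star x ∈ I := by
  intro x hx
  induction hx using NonUnitalStarAlgebra.adjoin_induction with
  | mem x hx =>
    intro r
    rw [Set.mem_singleton_iff] at hx
    subst hx
    constructor
    · rw [← smul_mul_assoc]
      exact I.mul_mem_left _ _ ha
    · rw [star_mul, star_star, ← smul_mul_assoc]
      exact I.mul_mem_left _ _ ha
  | add x y hx hy hx' hy' =>
    intro r
    exact ⟨by rw [smul_add]; exact I.add_mem (hx' r).1 (hy' r).1,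
      by rw [star_add, smul_add]; exact I.add_mem (hx' r).2 (hy' r).2⟩
  | zero => intro r; simp [I.zero_mem]
  | mul x y hx hy hx' hy' =>
    intro r
    constructor
    · rw [← smul_mul_assoc]
      exact I.mul_mem_right _ _ (hx' r).1
    · rw [star_mul, ← smul_mul_assoc]
      exact I.mul_mem_right _ _ (hy' r).2
  | smul s x hx hx' =>
    intro r
    constructor
    · rw [smul_smul]; exact (hx' (r * s)).1
    · rw [star_smul, star_trivial, smul_smul]; exact (hx' (r * s)).2
  | star x hx hx' =>
    intro r
    exact ⟨(hx' r).2, by rw [star_star]; exact (hx' r).1⟩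

private lemma aux_ineq1 (s t : ℝ) (hs : 0 < s) : |t| * (s ^ 2) ^ 2 * 2 ≤ s * (t ^ 2 + s ^ 2) ^ 2 := by
  have h1 : 2 * |t| * s ≤ t ^ 2 + s ^ 2 := by nlinarith [sq_nonneg (|t| - s), sq_abs t]
  have h2 : s ^ 2 ≤ t ^ 2 + s ^ 2 := by nlinarith [sq_nonneg t]
  have h3 : (2 * |t| * s) * s ^ 2 ≤ (t ^ 2 + s ^ 2) * (t ^ 2 + s ^ 2) :=
    mul_le_mul h1 h2 (by positivity) (by nlinarith [sq_nonneg t, sq_nonneg s])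
  nlinarith [mul_le_mul_of_nonneg_left h3 hs.le, abs_nonneg t]

private lemma aux_ineq2 (x d : ℝ) (hx : 0 ≤ x) (hd : 0 < d) (h : x * x ≤ d ^ 2 / 2) : x ≤ d := by
  nlinarith

set_option maxHeartbeats 1000000 in
lemma smul_mem_of_isClosed (I : TwoSidedIdeal A) (hI : IsClosed (I : Set A)) (c : ℂ) {a : A}
    (ha : a ∈ I) : c • a ∈ I := by
  set b := star a * a with hb_def
  have hb : IsSelfAdjoint b := IsSelfAdjoint.star_mul_self a
  have hsub : closure (NonUnitalStarAlgebra.adjoin ℝ ({b} : Set A) : Set A) ⊆ (I : Set A) := by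
    refine closure_minimal (fun x hx => ?_) hI
    simpa using (adjoin_star_mul_self_subset I ha x hx 1).1
  -- main approximation step
  have key : ∀ δ : ℝ, 0 < δ → ∃ y ∈ I, ‖c • a - y‖ < δ := by
    intro δ hδ
    set d : ℝ := δ / (‖c‖ + 1) with hd_def
    have hd : 0 < d := by positivity
    set ε : ℝ := d ^ 4 with hε_def
    have hε : 0 < ε := by positivity
    set f : ℝ → ℝ := fun t => t ^ 2 / (t ^ 2 + ε) with hf_def
    have hfc : Continuous f := by
      apply Continuous.div (by fun_prop) (by fun_prop)
      intro t; positivity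
    have hf0 : f 0 = 0 := by simp [hf_def]
    set bε : A := cfcₙ f b with hbε_def
    have hbε_mem : bε ∈ I := hsub (cfcn_mem_closure_adjoin b hb f hfc.continuousOn hf0)
    have hbε_sa : IsSelfAdjoint bε := cfcₙ_predicate f b
    set g : ℝ → ℝ := fun t => t * (1 - f t) ^ 2 with hg_def
    have hid : ContinuousOn (fun t : ℝ => t) (quasispectrum ℝ b) := by fun_prop
    have e1 : cfcₙ (fun t : ℝ => t * f t) b = b * bε := by
      rw [cfcₙ_mul _ _ b hid rfl hfc.continuousOn hf0, cfcₙ_id' ℝ b]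
    have e2 : cfcₙ (fun t : ℝ => f t * t) b = bε * b := by
      rw [cfcₙ_mul _ _ b hfc.continuousOn hf0 hid rfl, cfcₙ_id' ℝ b]
    have e3 : cfcₙ (fun t : ℝ => f t * t * f t) b = bε * b * bε := by
      rw [cfcₙ_mul _ _ b (by exact (hfc.continuousOn.mul hid)) (by simp [hf0])
        hfc.continuousOn hf0, e2]
    have e4 : cfcₙ (fun t : ℝ => t - t * f t - f t * t + f t * t * f t) b
        = b - b * bε - bε * b + bε * b * bε := by
      rw [cfcₙ_add _ _ b (by exact ((hid.sub (hid.mul hfc.continuousOn)).sub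
          (hfc.continuousOn.mul hid))) (by simp [hf0])
        (by exact (hfc.continuousOn.mul hid).mul hfc.continuousOn) (by simp [hf0]),
        cfcₙ_sub (fun t => t - t * f t) (fun t => f t * t) b (by exact hid.sub (hid.mul hfc.continuousOn)) (by simp [hf0])
          (hfc.continuousOn.mul hid) (by simp [hf0]),
        cfcₙ_sub (fun t => t) (fun t => t * f t) b hid rfl (hid.mul hfc.continuousOn) (by simp [hf0]),
        e1, e2, e3, cfcₙ_id' ℝ b]
    have e5 : star (a - a * bε) * (a - a * bε) = b - b * bε - bε * b + bε * b * bε := by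
      rw [star_sub, star_mul, hbε_sa.star_eq, hb_def]
      noncomm_ring
    have hgeq : ∀ t : ℝ, g t = t - t * f t - f t * t + f t * t * f t := by
      intro t; simp only [hg_def]; ring
    have e6 : star (a - a * bε) * (a - a * bε) = cfcₙ g b := by
      rw [e5, ← e4]
      exact (cfcₙ_congr (fun t _ => (hgeq t))).symm
    -- norm bound on cfcₙ g b
    have hbound : ‖cfcₙ g b‖ ≤ d ^ 2 / 2 := by
      apply norm_cfcₙ_le
      intro t _
      have hden : (0 : ℝ) < t ^ 2 + ε := by positivity
      have h1f : (1 : ℝ) - f t = ε / (t ^ 2 + ε) := by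
        simp only [hf_def]; field_simp; ring
      rw [hg_def]
      simp only
      rw [h1f, Real.norm_eq_abs, abs_mul, abs_pow, abs_div, abs_of_pos hε, abs_of_pos hden,
        div_pow]
      have hre : |t| * (ε ^ 2 / (t ^ 2 + ε) ^ 2) = |t| * ε ^ 2 / (t ^ 2 + ε) ^ 2 := by ring
      rw [hre, div_le_div_iff₀ (by positivity) (by norm_num : (0:ℝ) < 2)]
      have hε2 : ε = (d ^ 2) ^ 2 := by rw [hε_def]; ring
      rw [hε2]
      exact aux_ineq1 (d ^ 2) t (by positivity)
    -- conclude
    have hnorm2 : ‖a - a * bε‖ * ‖a - a * bε‖ ≤ d ^ 2 / 2 := by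
      rw [← CStarRing.norm_star_mul_self, e6]
      exact hbound
    have hnorm : ‖a - a * bε‖ ≤ d :=
      aux_ineq2 _ _ (norm_nonneg _) hd hnorm2
    refine ⟨(c • a) * bε, I.mul_mem_left _ _ hbε_mem, ?_⟩
    have : c • a - (c • a) * bε = c • (a - a * bε) := by
      rw [smul_sub, smul_mul_assoc]
    rw [this, norm_smul]
    calc ‖c‖ * ‖a - a * bε‖ ≤ ‖c‖ * d := by
          exact mul_le_mul_of_nonneg_left hnorm (norm_nonneg c)
      _ < δ := by
          have hq : d * (‖c‖ + 1) = δ := by rw [hd_def]; field_simp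
          nlinarith [hq, hd, norm_nonneg c]
  have : c • a ∈ closure (I : Set A) :=
    Metric.mem_closure_iff.mpr fun δ hδ => by
      obtain ⟨y, hy, hlt⟩ := key δ hδ
      exact ⟨y, hy, by rwa [dist_eq_norm]⟩
  rwa [hI.closure_eq] at this

end Helpers

section C0Helpers

variable {X : Type*} [TopologicalSpace X]

/-- A compactly supported continuous real function times a fixed vector, as a `C₀` function. -/
noncomputable def cptSMul {E : Type*} [NormedAddCommGroup E] [NormedSpace ℝ E]
    (h : C(X, ℝ)) (hh : HasCompactSupport h) (a : E) : C₀(X, E) where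
  toFun := fun x => h x • a
  continuous_toFun := h.continuous.smul continuous_const
  zero_at_infty' := by
    have hev : (fun x => h x • a) =ᶠ[Filter.cocompact X] (fun _ => (0 : E)) := by
      rw [Filter.eventuallyEq_iff_exists_mem]
      refine ⟨(tsupport h)ᶜ, ?_, fun x hx => by
        simp [image_eq_zero_of_notMem_tsupport hx]⟩
      rw [Filter.mem_cocompact]
      exact ⟨tsupport h, hh, subset_rfl⟩
    exact Filter.Tendsto.congr' hev.symm tendsto_const_nhds

@[simp] lemma cptSMul_apply {E : Type*} [NormedAddCommGroup E] [NormedSpace ℝ E]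
    (h : C(X, ℝ)) (hh : HasCompactSupport h) (a : E) (x : X) :
    cptSMul h hh a x = h x • a := rfl

end C0Helpers

/-- Let `X` be a locally compact Hausdorff space, `A` a C*-algebra, and
`Φ` a monotone map from open subsets of `X` to closed two-sided ideals of `A` such that for
every `x ∈ X`, `Φ(X ∖ {x})` is the closure of the union of the `Φ(U)` over all open `U`
with compact closure contained in `X ∖ {x}`.  In `C₀(X, A)` let
`I := {φ | ∀ x, φ x ∈ Φ(X ∖ {x})}` and let `J` be the smallest closed two-sided ideal
containing all functions `x ↦ f(x) • a` with `U, V` disjoint open, `f ∈ C₀(X)` vanishing on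
`X ∖ U`, and `a ∈ Φ(V)`.  Then `I = J`. -/
theorem good_ideal_eq
    {X : Type*} [TopologicalSpace X] [LocallyCompactSpace X] [T2Space X]
    {A : Type*} [NonUnitalCStarAlgebra A]
    (Φ : Set X → TwoSidedIdeal A)
    (hcl : ∀ U : Set X, IsOpen U → IsClosed (Φ U : Set A))
    (hmono : ∀ U V : Set X, IsOpen U → IsOpen V → U ⊆ V → (Φ U : Set A) ⊆ (Φ V : Set A))
    (hreg : ∀ x : X, (Φ ({x}ᶜ : Set X) : Set A) =
      closure (⋃ U ∈ {U : Set X | IsOpen U ∧ IsCompact (closure U) ∧ closure U ⊆ ({x}ᶜ : Set X)},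
        (Φ U : Set A))) :
    {φ : C₀(X, A) | ∀ x : X, φ x ∈ Φ ({x}ᶜ : Set X)} =
      ⋂ T ∈ {T : TwoSidedIdeal C₀(X, A) | IsClosed (T : Set C₀(X, A)) ∧
        {ψ : C₀(X, A) | ∃ U V : Set X, IsOpen U ∧ IsOpen V ∧ Disjoint U V ∧
          ∃ f : C₀(X, ℂ), (∀ x ∉ U, f x = 0) ∧ ∃ a ∈ Φ V, ∀ x, ψ x = f x • a} ⊆
          (T : Set C₀(X, A))},
        (T : Set C₀(X, A)) := by
  set Gen : Set C₀(X, A) :=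
    {ψ : C₀(X, A) | ∃ U V : Set X, IsOpen U ∧ IsOpen V ∧ Disjoint U V ∧
      ∃ f : C₀(X, ℂ), (∀ x ∉ U, f x = 0) ∧ ∃ a ∈ Φ V, ∀ x, ψ x = f x • a} with hGen_def
  apply Set.Subset.antisymm
  · -- hard direction
    intro φ hφ
    refine Set.mem_iInter₂.mpr fun T hT => ?_
    obtain ⟨hTclosed, hTgen⟩ := hT
    rw [← hTclosed.closure_eq]
    refine Metric.mem_closure_iff.mpr fun δ hδ => ?_
    set ε : ℝ := δ / 3 with hε_def
    have hε : 0 < ε := by positivity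
    -- a compact set outside of which `φ` is small
    obtain ⟨t0, ht0c, ht0⟩ : ∃ t0 : Set X, IsCompact t0 ∧ ∀ x ∉ t0, ‖φ x‖ < ε := by
      have h1 : ∀ᶠ x in Filter.cocompact X, φ x ∈ Metric.ball (0 : A) ε :=
        (zero_at_infty φ) (Metric.ball_mem_nhds 0 hε)
      rw [Filter.eventually_iff, Filter.mem_cocompact] at h1
      obtain ⟨t0, ht0c, hsub⟩ := h1
      refine ⟨t0, ht0c, fun x hx => ?_⟩
      have := hsub hx
      simpa [Metric.mem_ball, dist_zero_right] using this
    set K : Set X := {x : X | ε ≤ ‖φ x‖} with hK_def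
    have hKclosed : IsClosed K := isClosed_le continuous_const (φ.continuous.norm)
    have hKc : IsCompact K := ht0c.of_isClosed_subset hKclosed
      (fun x hx => by_contra fun h => absurd (ht0 x h) (not_lt.mpr hx))
    -- local approximation data
    have key : ∀ x ∈ K, ∃ (U W : Set X) (a : A), IsOpen U ∧ IsOpen W ∧ x ∈ U ∧
        Disjoint U W ∧ a ∈ Φ W ∧ ∀ y ∈ U, ‖φ y - a‖ < ε := by
      intro x hx
      have h1 : φ x ∈ closure (⋃ U ∈ {U : Set X | IsOpen U ∧ IsCompact (closure U) ∧
          closure U ⊆ ({x}ᶜ : Set X)}, (Φ U : Set A)) := by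
        rw [← hreg x]; exact hφ x
      obtain ⟨a, ha, hdista⟩ := Metric.mem_closure_iff.mp h1 ε hε
      obtain ⟨W, hWmem, haW⟩ := Set.mem_iUnion₂.mp ha
      obtain ⟨hWo, _, hWsub⟩ := hWmem
      have hxW : x ∉ closure W := fun h => (hWsub h) rfl
      refine ⟨{y | ‖φ y - a‖ < ε} ∩ (closure W)ᶜ, W, a, ?_, hWo, ?_, ?_, haW, ?_⟩
      · exact IsOpen.inter (isOpen_lt (by fun_prop) continuous_const)
          isClosed_closure.isOpen_compl
      · exact ⟨by simpa [dist_eq_norm] using hdista, hxW⟩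
      · exact Set.disjoint_left.mpr fun y hy hyW => hy.2 (subset_closure hyW)
      · exact fun y hy => hy.1
    choose! U W aa hUo hWo hxU hdisj haW happrox using key
    have hcover : K ⊆ ⋃ x ∈ K, U x := fun x hx => Set.mem_biUnion hx (hxU x hx)
    obtain ⟨s, hsK, hsfin, hscov⟩ :=
      hKc.elim_finite_subcover_image (fun x hx => hUo x hx) hcover
    haveI : Fintype ↥s := hsfin.fintype
    have hscov' : K ⊆ ⋃ i : ↥s, U i := by
      intro x hx
      obtain ⟨i, hi, hxi⟩ := Set.mem_iUnion₂.mp (hscov hx)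
      exact Set.mem_iUnion.mpr ⟨⟨i, hi⟩, hxi⟩
    obtain ⟨ρ, hρsub, hρcs⟩ :=
      PartitionOfUnity.exists_isSubordinate_of_locallyFinite_t2space hKc
        (fun i : ↥s => U i) (fun i => hUo i (hsK i.2)) (locallyFinite_of_finite _) hscov'
    -- the approximating element of `T`
    set ψ : C₀(X, A) := ∑ i : ↥s, cptSMul (ρ i) (hρcs i) (aa i) with hψ_def
    have hψT : ψ ∈ (T : Set C₀(X, A)) := by
      refine sum_mem fun i _ => ?_
      apply hTgen
      refine ⟨U i, W i, hUo i (hsK i.2), hWo i (hsK i.2), hdisj i (hsK i.2),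
        cptSMul (ρ i) (hρcs i) ((1 : ℂ)), ?_, aa i, haW i (hsK i.2), ?_⟩
      · intro x hx
        have : (ρ i) x = 0 :=
          image_eq_zero_of_notMem_tsupport (fun h => hx (hρsub i h))
        simp [this]
      · intro x
        rw [cptSMul_apply, cptSMul_apply, smul_assoc, one_smul]
    -- evaluation of the sum
    have hψx : ∀ x : X, ψ x = ∑ i : ↥s, ρ i x • aa i := by
      intro x
      rw [hψ_def]
      exact map_sum (AddMonoidHom.mk' (fun χ : C₀(X, A) => χ x) (fun f g => rfl)) _ Finset.univ
    -- pointwise estimate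
    have hpt : ∀ x : X, ‖φ x - ψ x‖ ≤ 2 * ε := by
      intro x
      set sx : ℝ := ∑ i : ↥s, ρ i x with hsx_def
      have hsum_fin : ∑ᶠ i, ρ i x = sx := finsum_eq_sum_of_fintype _
      have hsx0 : 0 ≤ sx := Finset.sum_nonneg fun i _ => ρ.nonneg i x
      have hsx1 : sx ≤ 1 := by rw [← hsum_fin]; exact ρ.sum_le_one x
      have hterm : ∀ i : ↥s, ‖ρ i x • (φ x - aa i)‖ ≤ ρ i x * ε := by
        intro i
        by_cases hz : ρ i x = 0
        · simp [hz]
        · have hxU : x ∈ U i := hρsub i (subset_tsupport _ hz)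
          have := happrox i (hsK i.2) x hxU
          rw [norm_smul, Real.norm_eq_abs, abs_of_nonneg (ρ.nonneg i x)]
          exact mul_le_mul_of_nonneg_left this.le (ρ.nonneg i x)
      have hdecomp : φ x - ψ x = (∑ i : ↥s, ρ i x • (φ x - aa i)) + (1 - sx) • φ x := by
        rw [hψx x]
        have h1 : ∑ i : ↥s, ρ i x • (φ x - aa i)
            = sx • φ x - ∑ i : ↥s, ρ i x • aa i := by
          simp only [smul_sub]
          rw [Finset.sum_sub_distrib]
          congr 1
          rw [hsx_def, Finset.sum_smul]
        rw [h1, sub_smul, one_smul]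
        abel
      rw [hdecomp]
      have h2 : ‖∑ i : ↥s, ρ i x • (φ x - aa i)‖ ≤ sx * ε := by
        refine le_trans (norm_sum_le _ _) ?_
        rw [hsx_def, Finset.sum_mul]
        exact Finset.sum_le_sum fun i _ => hterm i
      have h3 : ‖(1 - sx) • φ x‖ ≤ ε := by
        rw [norm_smul, Real.norm_eq_abs, abs_of_nonneg (by linarith)]
        by_cases hxK : x ∈ K
        · have : sx = 1 := by rw [← hsum_fin]; exact ρ.sum_eq_one hxK
          simp [this, hε.le]
        · have hlt : ‖φ x‖ < ε := by
            rw [hK_def] at hxK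
            simpa using not_le.mp hxK
          calc (1 - sx) * ‖φ x‖ ≤ 1 * ε := by
                apply mul_le_mul (by linarith) hlt.le (norm_nonneg _) (by norm_num)
            _ = ε := one_mul ε
      calc ‖(∑ i : ↥s, ρ i x • (φ x - aa i)) + (1 - sx) • φ x‖
          ≤ ‖∑ i : ↥s, ρ i x • (φ x - aa i)‖ + ‖(1 - sx) • φ x‖ := norm_add_le _ _
        _ ≤ sx * ε + ε := add_le_add h2 h3
        _ ≤ 1 * ε + ε := by nlinarith
        _ = 2 * ε := by ring
    refine ⟨ψ, hψT, ?_⟩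
    rw [dist_eq_norm]
    have hnorm : ‖φ - ψ‖ ≤ 2 * ε := by
      rw [← ZeroAtInftyContinuousMap.norm_toBCF_eq_norm]
      refine (BoundedContinuousFunction.norm_le (by positivity)).mpr fun x => ?_
      exact hpt x
    calc ‖φ - ψ‖ ≤ 2 * ε := hnorm
      _ < δ := by rw [hε_def]; linarith
  · -- easy direction
    set T₀ : TwoSidedIdeal C₀(X, A) := TwoSidedIdeal.mk'
      {φ : C₀(X, A) | ∀ x : X, φ x ∈ Φ ({x}ᶜ : Set X)}
      (fun x => by simp [(Φ _).zero_mem])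
      (fun {φ ψ} hφ hψ x => by
        rw [ZeroAtInftyContinuousMap.add_apply]
        exact (Φ _).add_mem (hφ x) (hψ x))
      (fun {φ} hφ x => by
        rw [ZeroAtInftyContinuousMap.neg_apply]
        exact (Φ _).neg_mem (hφ x))
      (fun {φ ψ} hψ x => by
        rw [ZeroAtInftyContinuousMap.mul_apply]
        exact (Φ _).mul_mem_left _ _ (hψ x))
      (fun {φ ψ} hφ x => by
        rw [ZeroAtInftyContinuousMap.mul_apply]
        exact (Φ _).mul_mem_right _ _ (hφ x)) with hT₀_def
    have hT₀coe : (T₀ : Set C₀(X, A)) = {φ : C₀(X, A) | ∀ x : X, φ x ∈ Φ ({x}ᶜ : Set X)} :=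
      TwoSidedIdeal.coe_mk' _ _ _ _ _ _
    have heval : ∀ x : X, Continuous fun φ : C₀(X, A) => φ x := by
      intro x
      have hdist : ∀ φ ψ : C₀(X, A), dist (φ x) (ψ x) ≤ dist φ ψ := fun φ ψ =>
        le_trans (BoundedContinuousFunction.dist_coe_le_dist (f := φ.toBCF) (g := ψ.toBCF) x)
          (le_of_eq ZeroAtInftyContinuousMap.dist_toBCF_eq_dist)
      exact (LipschitzWith.mk_one (fun φ ψ => hdist φ ψ)).continuous
    have hT₀closed : IsClosed (T₀ : Set C₀(X, A)) := by
      rw [hT₀coe]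
      have : {φ : C₀(X, A) | ∀ x : X, φ x ∈ Φ ({x}ᶜ : Set X)} =
          ⋂ x : X, (fun φ : C₀(X, A) => φ x) ⁻¹' (Φ ({x}ᶜ : Set X) : Set A) := by
        ext φ; simp only [Set.mem_setOf_eq, Set.mem_iInter, Set.mem_preimage, SetLike.mem_coe]
      rw [this]
      exact isClosed_iInter fun x =>
        (hcl _ isOpen_compl_singleton).preimage (heval x)
    have hT₀gen : Gen ⊆ (T₀ : Set C₀(X, A)) := by
      rintro ψ ⟨U, V, hU, hV, hUV, f, hf, a, haV, hψ⟩
      rw [hT₀coe]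
      intro x
      rw [hψ x]
      by_cases hx : x ∈ U
      · have hxV : x ∉ V := Set.disjoint_left.mp hUV hx
        have hVsub : V ⊆ ({x}ᶜ : Set X) := fun y hy => by
          simp only [Set.mem_compl_iff, Set.mem_singleton_iff]
          rintro rfl; exact hxV hy
        exact smul_mem_of_isClosed _ (hcl _ isOpen_compl_singleton) (f x)
          (hmono V ({x}ᶜ) hV isOpen_compl_singleton hVsub haV)
      · rw [hf x hx, zero_smul]
        exact (Φ _).zero_mem
    intro φ hφ
    have := Set.mem_iInter₂.mp hφ T₀ ⟨hT₀closed, hT₀gen⟩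
    rwa [hT₀coe] at this
end

section
/- Let P be a complete lattice whose way-below relation is stable, meaning that p ≪ q and p ≪ q' imply p ≪ q ⊓ q'. Let L be a frame and h : P → L a map preserving binary meets, i.e. h(q ⊓ q') = h(q) ⊓ h(q') for all q, q' ∈ P. Define R(h)(q) := ⨆ {h(p) : p ∈ P, p ≪ q}. Then for all q, q' ∈ P one has R(h)(q ⊓ q') = R(h)(q) ⊓ R(h)(q'). -/
/-- `p` is way below `q`: for every nonempty directed subset `S` with `q ≤ sSup S` there is
`s ∈ S` with `p ≤ s`. -/
def WayBelow {P : Type*} [CompleteLattice P] (p q : P) : Prop :=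
  ∀ S : Set P, S.Nonempty → DirectedOn (· ≤ ·) S → q ≤ sSup S → ∃ s ∈ S, p ≤ s

/-- Let `P` be a complete lattice whose way-below relation is stable
(`p ≪ q` and `p ≪ q'` imply `p ≪ q ⊓ q'`), `L` a frame, and `h : P → L` a map preserving
binary meets.  With `R(h)(q) := ⨆ {h p : p ≪ q}`, one has
`R(h)(q ⊓ q') = R(h)(q) ⊓ R(h)(q')`. -/
theorem regularization_preserves_binary_meets
    {P L : Type*} [CompleteLattice P] [Order.Frame L]
    (hstab : ∀ p q q' : P, WayBelow p q → WayBelow p q' → WayBelow p (q ⊓ q'))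
    (h : P → L) (hmeet : ∀ q q' : P, h (q ⊓ q') = h q ⊓ h q')
    (q q' : P) :
    sSup (h '' {p : P | WayBelow p (q ⊓ q')}) =
      sSup (h '' {p : P | WayBelow p q}) ⊓ sSup (h '' {p : P | WayBelow p q'}) := by
  have mono2 : ∀ p a b : P, a ≤ b → WayBelow p a → WayBelow p b :=
    fun p a b hab hw S hS hd hle => hw S hS hd (hab.trans hle)
  have mono1 : ∀ p p' a : P, p' ≤ p → WayBelow p a → WayBelow p' a := by
    intro p p' a hpp hw S hS hd hle
    obtain ⟨s, hs, hps⟩ := hw S hS hd hle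
    exact ⟨s, hs, hpp.trans hps⟩
  apply le_antisymm
  · apply le_inf
    · apply sSup_le_sSup
      exact Set.image_mono fun p hp => mono2 p _ _ inf_le_left hp
    · apply sSup_le_sSup
      exact Set.image_mono fun p hp => mono2 p _ _ inf_le_right hp
  · rw [sSup_inf_sSup]
    apply iSup_le; rintro ⟨x, y⟩
    apply iSup_le; rintro ⟨⟨p, hp, rfl⟩, ⟨p', hp', rfl⟩⟩
    rw [← hmeet]
    apply le_sSup
    refine ⟨p ⊓ p', ?_, rfl⟩
    exact hstab _ _ _ (mono1 p _ q inf_le_left hp) (mono1 p' _ q' inf_le_right hp')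
end

section
/- Let X be a locally compact Hausdorff space, A a C*-algebra, and m : C₀(X, A) → A a surjective ⋆-homomorphism which is A-bilinear, i.e. m(φ·b) = m(φ)·b and m(b·φ) = b·m(φ) for all φ ∈ C₀(X, A) and b ∈ A. Then for every f ∈ C₀(X) there is a unique multiplier ψ(f) ∈ 𝓜(A) whose left and right actions on every a ∈ A are both given by a ↦ m(f·a), where f·a denotes the function x ↦ f(x)·a ∈ C₀(X, A). Moreover each ψ(f) lies in the center of 𝓜(A), the map f ↦ ψ(f) is a ⋆-homomorphism C₀(X) → 𝓜(A), and ψ is essential: if z lies in the center of 𝓜(A) and ψ(f)·z = 0 for all f ∈ C₀(X), then z = 0. -/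
open scoped ZeroAtInfty MultiplierAlgebra

/-- For `f ∈ C₀(X, ℂ)` and `a ∈ A`, the function `f·a : x ↦ f(x) • a`, an element of
`C₀(X, A)`. -/
noncomputable def smulC0 {X : Type*} [TopologicalSpace X] {A : Type*}
    [NonUnitalCStarAlgebra A] (f : C₀(X, ℂ)) (a : A) : C₀(X, A) where
  toFun x := f x • a
  continuous_toFun := (map_continuous f).smul continuous_const
  zero_at_infty' := by simpa using (zero_at_infty f).smul_const a

namespace StructureHomAux

open Filter Topology

variable {X : Type*} [TopologicalSpace X] {A : Type*} [NonUnitalCStarAlgebra A]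

@[simp] lemma smulC0_apply (f : C₀(X, ℂ)) (a : A) (x : X) : smulC0 f a x = f x • a := rfl

lemma smulC0_add (f : C₀(X, ℂ)) (a b : A) :
    smulC0 f (a + b) = smulC0 f a + smulC0 f b := by
  ext x; simp [smul_add]

lemma smulC0_sub (f : C₀(X, ℂ)) (a b : A) :
    smulC0 f (a - b) = smulC0 f a - smulC0 f b := by
  ext x; simp [smul_sub]

lemma smulC0_addf (f g : C₀(X, ℂ)) (a : A) :
    smulC0 (f + g) a = smulC0 f a + smulC0 g a := by
  ext x; simp [add_smul]

lemma smulC0_star (f : C₀(X, ℂ)) (a : A) :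
    star (smulC0 f a) = smulC0 (star f) (star a) := by
  ext x; simp [star_smul]

lemma smulC0_mul (f g : C₀(X, ℂ)) (a b : A) :
    smulC0 f a * smulC0 g b = smulC0 (f * g) (a * b) := by
  ext x
  simp only [ZeroAtInftyContinuousMap.mul_apply, smulC0_apply]
  rw [smul_mul_assoc, mul_smul_comm, smul_smul]

/-- Exact scalar factorization `Φ = f • Ψ` in `C₀(X, A)`. -/
lemma exists_scalar_factor (Φ : C₀(X, A)) :
    ∃ (f : C₀(X, ℂ)) (Ψ : C₀(X, A)), ∀ x, Φ x = f x • Ψ x := by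
  set g : X → ℝ := fun x => Real.sqrt ‖Φ x‖ with hg_def
  have hg : Continuous g := Real.continuous_sqrt.comp ((map_continuous Φ).norm)
  have hg0 : Tendsto g (cocompact X) (𝓝 0) := by
    have h1 : Tendsto (fun x => ‖Φ x‖) (cocompact X) (𝓝 0) := by
      simpa using (zero_at_infty Φ).norm
    have := (Real.continuous_sqrt.tendsto 0).comp h1
    rw [Real.sqrt_zero] at this
    exact this
  have hgnn : ∀ x, 0 ≤ g x := fun x => Real.sqrt_nonneg _
  have hgzero : ∀ x, g x = 0 → Φ x = 0 := by
    intro x hx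
    have : ‖Φ x‖ = 0 := Real.sqrt_eq_zero (norm_nonneg (Φ x)) |>.mp hx
    simpa using norm_eq_zero.mp this
  set Ψf : X → A := fun x => ((g x : ℂ))⁻¹ • Φ x with hΨf_def
  have hbound : ∀ x, ‖Ψf x‖ ≤ g x := by
    intro x
    by_cases hx : g x = 0
    · simp [hΨf_def, hgzero x hx, hx]
    · rw [hΨf_def]
      simp only [norm_smul, norm_inv, Complex.norm_real, Real.norm_eq_abs,
        abs_of_nonneg (hgnn x)]
      have hΦ : ‖Φ x‖ = g x * g x := (Real.mul_self_sqrt (norm_nonneg _)).symm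
      rw [hΦ, inv_mul_cancel_left₀ hx]
  have hΨcont : Continuous Ψf := by
    rw [continuous_iff_continuousAt]
    intro x₀
    by_cases hx : g x₀ = 0
    · have hΨ0 : Ψf x₀ = 0 := by simp [hΨf_def, hgzero x₀ hx]
      rw [ContinuousAt, hΨ0]
      refine squeeze_zero_norm hbound ?_
      have := hg.continuousAt (x := x₀)
      rwa [ContinuousAt, hx] at this
    · have hgc : ContinuousAt (fun x => ((g x : ℝ) : ℂ)) x₀ :=
        Complex.continuous_ofReal.continuousAt.comp (hg.continuousAt)
      have hne : ((g x₀ : ℝ) : ℂ) ≠ 0 := by exact_mod_cast hx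
      exact (hgc.inv₀ hne).smul (map_continuous Φ).continuousAt
  have hΨ0 : Tendsto Ψf (cocompact X) (𝓝 0) := squeeze_zero_norm hbound hg0
  refine ⟨⟨⟨fun x => ((g x : ℝ) : ℂ), Complex.continuous_ofReal.comp hg⟩, ?_⟩,
    ⟨⟨Ψf, hΨcont⟩, hΨ0⟩, ?_⟩
  · have := (Complex.continuous_ofReal.tendsto 0).comp hg0
    rw [Complex.ofReal_zero] at this
    exact this
  · intro x
    show Φ x = ((g x : ℝ) : ℂ) • Ψf x
    by_cases hx : g x = 0
    · simp [hgzero x hx, hΨf_def]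
    · rw [hΨf_def]
      have hne : ((g x : ℝ) : ℂ) ≠ 0 := by exact_mod_cast hx
      rw [smul_smul, mul_inv_cancel₀ hne, one_smul]

/-- Every selfadjoint element of a C⋆-algebra is a difference of two squares. -/
lemma sa_prod {A : Type*} [NonUnitalCStarAlgebra A] (h : A) (hh : IsSelfAdjoint h) :
    ∃ x y : A, h = x * x - y * y := by
  refine ⟨cfcₙ (fun t : ℝ => Real.sqrt (max t 0)) h,
    cfcₙ (fun t : ℝ => Real.sqrt (max (-t) 0)) h, ?_⟩
  rw [← cfcₙ_mul .., ← cfcₙ_mul .., ← cfcₙ_sub ..]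
  conv_lhs => rw [← cfcₙ_id ℝ h]
  apply cfcₙ_congr
  intro t _
  simp only [id]
  rw [Real.mul_self_sqrt (le_max_right t 0), Real.mul_self_sqrt (le_max_right (-t) 0),
    max_zero_sub_max_neg_zero_eq_self]

lemma cancel_r {A : Type*} [NonUnitalCStarAlgebra A] (x : A)
    (hx : ∀ b : A, x * b = 0) : x = 0 := by
  have h := hx (star x)
  have : ‖x‖ * ‖x‖ = 0 := by rw [← CStarRing.norm_self_mul_star, h, norm_zero]
  simpa using mul_self_eq_zero.mp this

lemma cancel_l {A : Type*} [NonUnitalCStarAlgebra A] (x : A)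
    (hx : ∀ b : A, b * x = 0) : x = 0 := by
  have h := hx (star x)
  have : ‖x‖ * ‖x‖ = 0 := by rw [← CStarRing.norm_star_mul_self, h, norm_zero]
  simpa using mul_self_eq_zero.mp this

lemma Mfst_mul (T : 𝓜(ℂ, A)) (x y : A) : T.fst (x * y) = T.fst x * y := by
  refine sub_eq_zero.mp (cancel_l _ fun z => ?_)
  rw [mul_sub, ← T.central z (x * y), ← mul_assoc z (T.fst x) y, ← T.central z x,
    mul_assoc (T.snd z) x y, sub_self]

lemma Msnd_mul (T : 𝓜(ℂ, A)) (x y : A) : T.snd (x * y) = x * T.snd y := by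
  refine sub_eq_zero.mp (cancel_r _ fun z => ?_)
  rw [sub_mul, T.central (x * y) z, mul_assoc x y (T.fst z), ← T.central y z,
    mul_assoc x (T.snd y) z, sub_self]

section M
variable (m : C₀(X, A) →ₙ+* A)
  (hbil_r : ∀ (φ ψ : C₀(X, A)) (b : A), (∀ x, ψ x = φ x * b) → m ψ = m φ * b)
  (hbil_l : ∀ (φ ψ : C₀(X, A)) (b : A), (∀ x, ψ x = b * φ x) → m ψ = b * m φ)

include hbil_r in
lemma L_mul_r (f : C₀(X, ℂ)) (a b : A) : m (smulC0 f (a * b)) = m (smulC0 f a) * b :=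
  hbil_r (smulC0 f a) (smulC0 f (a * b)) b fun x => by simp [smul_mul_assoc]

include hbil_l in
lemma L_mul_l (f : C₀(X, ℂ)) (a b : A) : m (smulC0 f (a * b)) = a * m (smulC0 f b) :=
  hbil_l (smulC0 f b) (smulC0 f (a * b)) a fun x => by simp [mul_smul_comm]

include hbil_r hbil_l in
lemma L_central (f : C₀(X, ℂ)) (a b : A) :
    m (smulC0 f a) * b = a * m (smulC0 f b) := by
  rw [← L_mul_r m hbil_r, L_mul_l m hbil_l]

lemma L_add (f : C₀(X, ℂ)) (a b : A) :
    m (smulC0 f (a + b)) = m (smulC0 f a) + m (smulC0 f b) := by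
  rw [smulC0_add, map_add]

lemma L_sub (f : C₀(X, ℂ)) (a b : A) :
    m (smulC0 f (a - b)) = m (smulC0 f a) - m (smulC0 f b) := by
  rw [smulC0_sub, map_sub]

include hbil_r hbil_l in
lemma L_smul (f : C₀(X, ℂ)) (c : ℂ) (a : A) :
    m (smulC0 f (c • a)) = c • m (smulC0 f a) := by
  have hprod : ∀ (x y : A) (c : ℂ), m (smulC0 f (c • (x * y))) = c • m (smulC0 f (x * y)) := by
    intro x y c
    rw [← smul_mul_assoc, L_mul_l m hbil_l, smul_mul_assoc, ← L_mul_l m hbil_l]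
  have hsa : ∀ (h : A), IsSelfAdjoint h → ∀ c : ℂ,
      m (smulC0 f (c • h)) = c • m (smulC0 f h) := by
    intro h hh c
    obtain ⟨x, y, rfl⟩ := sa_prod h hh
    rw [smul_sub, L_sub, L_sub, smul_sub, hprod, hprod]
  have h1 : IsSelfAdjoint (a + star a) := by
    rw [IsSelfAdjoint, star_add, star_star, add_comm]
  have h2 : IsSelfAdjoint (Complex.I • (star a - a)) := by
    rw [IsSelfAdjoint, star_smul, star_sub, star_star, Complex.star_def, Complex.conj_I,
      neg_smul, ← smul_neg, neg_sub]
  have key : a + a = (a + star a) + Complex.I • (Complex.I • (star a - a)) := by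
    rw [smul_smul, Complex.I_mul_I, neg_smul, one_smul, neg_sub]
    abel
  have e1 : m (smulC0 f (c • (a + a))) = c • m (smulC0 f (a + a)) := by
    calc m (smulC0 f (c • (a + a)))
        = m (smulC0 f (c • (a + star a) + (c * Complex.I) • (Complex.I • (star a - a)))) := by
          rw [key, smul_add, smul_smul]
      _ = c • m (smulC0 f (a + star a))
            + (c * Complex.I) • m (smulC0 f (Complex.I • (star a - a))) := by
          rw [L_add, hsa _ h1, hsa _ h2]
      _ = c • (m (smulC0 f (a + star a))
            + Complex.I • m (smulC0 f (Complex.I • (star a - a)))) := by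
          rw [smul_add, mul_smul]
      _ = c • m (smulC0 f ((a + star a) + Complex.I • (Complex.I • (star a - a)))) := by
          rw [L_add m f (a + star a) (Complex.I • (Complex.I • (star a - a))), hsa _ h2]
      _ = c • m (smulC0 f (a + a)) := by rw [← key]
  have e3 : (2 : ℂ) • m (smulC0 f (c • a)) = (2 : ℂ) • (c • m (smulC0 f a)) := by
    rw [two_smul, two_smul, ← L_add, ← smul_add, e1, L_add, smul_add]
  exact smul_right_injective A (two_ne_zero (α := ℂ)) e3

/-- The map `a ↦ m (f·a)` as a linear map. -/
noncomputable def Llin (f : C₀(X, ℂ)) : A →ₗ[ℂ] A where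
  toFun a := m (smulC0 f a)
  map_add' := L_add m f
  map_smul' c a := L_smul m hbil_r hbil_l f c a

include hbil_r hbil_l in
lemma Llin_graph_closed (f : C₀(X, ℂ)) :
    IsClosed ((Llin m hbil_r hbil_l f).graph : Set (A × A)) := by
  have hset : ((Llin m hbil_r hbil_l f).graph : Set (A × A))
      = ⋂ b : A, {p : A × A | p.2 * b = p.1 * m (smulC0 f b)} := by
    ext p
    simp only [SetLike.mem_coe, LinearMap.mem_graph_iff, Set.mem_iInter, Set.mem_setOf_eq]
    constructor
    · intro h b
      rw [h]
      exact L_central m hbil_r hbil_l f p.1 b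
    · intro h
      refine sub_eq_zero.mp (cancel_r _ fun b => ?_)
      have hcoe : (Llin m hbil_r hbil_l f) p.1 = m (smulC0 f p.1) := rfl
      rw [sub_mul, h b, hcoe, L_central m hbil_r hbil_l f p.1 b, sub_self]
  rw [hset]
  exact isClosed_iInter fun b =>
    isClosed_eq (continuous_snd.mul continuous_const) (continuous_fst.mul continuous_const)

/-- The map `a ↦ m (f·a)` as a continuous linear map, via the closed graph theorem. -/
noncomputable def Lclm (f : C₀(X, ℂ)) : A →L[ℂ] A :=
  ContinuousLinearMap.ofIsClosedGraph (Llin_graph_closed m hbil_r hbil_l f)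

lemma Lclm_apply (f : C₀(X, ℂ)) (a : A) : Lclm m hbil_r hbil_l f a = m (smulC0 f a) := rfl

/-- The multiplier determined by `f`. -/
noncomputable def Tmul (f : C₀(X, ℂ)) : 𝓜(ℂ, A) where
  toProd := (Lclm m hbil_r hbil_l f, Lclm m hbil_r hbil_l f)
  central x y := by
    simp only [Lclm_apply]
    exact L_central m hbil_r hbil_l f x y

lemma Tmul_fst (f : C₀(X, ℂ)) (a : A) : (Tmul m hbil_r hbil_l f).fst a = m (smulC0 f a) := rfl
lemma Tmul_snd (f : C₀(X, ℂ)) (a : A) : (Tmul m hbil_r hbil_l f).snd a = m (smulC0 f a) := rfl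

end M

end StructureHomAux

/-- Let `X` be a locally compact Hausdorff space, `A` a C*-algebra and
`m : C₀(X, A) → A` a surjective `A`-bilinear ⋆-homomorphism.  Then for every `f ∈ C₀(X)`
there is a unique multiplier `ψ(f) ∈ 𝓜(A)` whose left and right actions on each `a ∈ A`
are both `a ↦ m(f·a)`; moreover each such `ψ(f)` is central, `f ↦ ψ(f)` is a
⋆-homomorphism, and `ψ` is essential. -/
theorem structure_hom_to_multiplier
    {X : Type*} [TopologicalSpace X] [LocallyCompactSpace X] [T2Space X]
    {A : Type*} [NonUnitalCStarAlgebra A]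
    (m : C₀(X, A) →ₙ+* A)
    (hstar : ∀ φ : C₀(X, A), m (star φ) = star (m φ))
    (hsurj : Function.Surjective m)
    (hbil_r : ∀ (φ ψ : C₀(X, A)) (b : A), (∀ x, ψ x = φ x * b) → m ψ = m φ * b)
    (hbil_l : ∀ (φ ψ : C₀(X, A)) (b : A), (∀ x, ψ x = b * φ x) → m ψ = b * m φ) :
    (∀ f : C₀(X, ℂ), ∃! T : 𝓜(ℂ, A),
        (∀ a : A, T.fst a = m (smulC0 f a)) ∧ (∀ a : A, T.snd a = m (smulC0 f a))) ∧
    (∀ ψ : C₀(X, ℂ) → 𝓜(ℂ, A),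
      (∀ (f : C₀(X, ℂ)) (a : A), (ψ f).fst a = m (smulC0 f a)) →
      (∀ (f : C₀(X, ℂ)) (a : A), (ψ f).snd a = m (smulC0 f a)) →
      ((∀ (f : C₀(X, ℂ)) (T : 𝓜(ℂ, A)), ψ f * T = T * ψ f) ∧
       (∀ f g : C₀(X, ℂ), ψ (f + g) = ψ f + ψ g) ∧
       (∀ f g : C₀(X, ℂ), ψ (f * g) = ψ f * ψ g) ∧
       (∀ f : C₀(X, ℂ), ψ (star f) = star (ψ f)) ∧
       (∀ z : 𝓜(ℂ, A), (∀ T : 𝓜(ℂ, A), z * T = T * z) →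
          (∀ f : C₀(X, ℂ), ψ f * z = 0) → z = 0))) := by
  open StructureHomAux in
  refine ⟨?_, ?_⟩
  · -- existence and uniqueness
    intro f
    refine ⟨StructureHomAux.Tmul m hbil_r hbil_l f,
      ⟨fun a => rfl, fun a => rfl⟩, ?_⟩
    rintro T ⟨h1, h2⟩
    refine DoubleCentralizer.ext _ _ _ _ (Prod.ext ?_ ?_)
    · exact ContinuousLinearMap.ext fun a => (h1 a).trans rfl
    · exact ContinuousLinearMap.ext fun a => (h2 a).trans rfl
  · intro ψ hfst hsnd
    have hcentral : ∀ (f : C₀(X, ℂ)) (a b : A),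
        m (smulC0 f a) * b = a * m (smulC0 f b) :=
      StructureHomAux.L_central m hbil_r hbil_l
    have hmulr := StructureHomAux.L_mul_r m hbil_r
    have hmull := StructureHomAux.L_mul_l m hbil_l
    refine ⟨?_, ?_, ?_, ?_, ?_⟩
    · -- centrality
      intro f T
      refine DoubleCentralizer.ext _ _ _ _ (Prod.ext ?_ ?_)
      · refine ContinuousLinearMap.ext fun a => ?_
        show ((ψ f).fst * T.fst) a = (T.fst * (ψ f).fst) a
        simp only [ContinuousLinearMap.mul_apply]
        rw [hfst, hfst]
        refine sub_eq_zero.mp (StructureHomAux.cancel_r _ fun b => ?_)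
        rw [sub_mul, hcentral f (T.fst a) b, ← StructureHomAux.Mfst_mul T a (m (smulC0 f b)),
          ← hcentral f a b, StructureHomAux.Mfst_mul T (m (smulC0 f a)) b, sub_self]
      · refine ContinuousLinearMap.ext fun a => ?_
        show (T.snd * (ψ f).snd) a = ((ψ f).snd * T.snd) a
        simp only [ContinuousLinearMap.mul_apply]
        rw [hsnd, hsnd]
        refine sub_eq_zero.mp (StructureHomAux.cancel_l _ fun b => ?_)
        rw [mul_sub, ← StructureHomAux.Msnd_mul T b (m (smulC0 f a)),
          ← hcentral f b a, StructureHomAux.Msnd_mul T (m (smulC0 f b)) a,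
          hcentral f b (T.snd a), sub_self]
    · -- additivity
      intro f g
      refine DoubleCentralizer.ext _ _ _ _ (Prod.ext ?_ ?_)
      · refine ContinuousLinearMap.ext fun a => ?_
        show (ψ (f + g)).fst a = ((ψ f).fst + (ψ g).fst) a
        rw [ContinuousLinearMap.add_apply, hfst, hfst, hfst, StructureHomAux.smulC0_addf,
          map_add]
      · refine ContinuousLinearMap.ext fun a => ?_
        show (ψ (f + g)).snd a = ((ψ f).snd + (ψ g).snd) a
        rw [ContinuousLinearMap.add_apply, hsnd, hsnd, hsnd, StructureHomAux.smulC0_addf,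
          map_add]
    · -- multiplicativity
      intro f g
      refine DoubleCentralizer.ext _ _ _ _ (Prod.ext ?_ ?_)
      · refine ContinuousLinearMap.ext fun a => ?_
        show (ψ (f * g)).fst a = ((ψ f).fst * (ψ g).fst) a
        simp only [ContinuousLinearMap.mul_apply]
        rw [hfst, hfst, hfst]
        refine sub_eq_zero.mp (StructureHomAux.cancel_r _ fun b => ?_)
        rw [sub_mul, ← hmulr (f * g) a b, hcentral f (m (smulC0 g a)) b,
          ← map_mul, StructureHomAux.smulC0_mul, mul_comm g f, sub_self]
      · refine ContinuousLinearMap.ext fun a => ?_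
        show (ψ (f * g)).snd a = ((ψ g).snd * (ψ f).snd) a
        simp only [ContinuousLinearMap.mul_apply]
        rw [hsnd, hsnd, hsnd]
        refine sub_eq_zero.mp (StructureHomAux.cancel_l _ fun b => ?_)
        rw [mul_sub, ← hmull (f * g) b a, ← hcentral g b (m (smulC0 f a)),
          ← map_mul, StructureHomAux.smulC0_mul, mul_comm g f, sub_self]
    · -- star
      intro f
      refine DoubleCentralizer.ext _ _ _ _ (Prod.ext ?_ ?_)
      · refine ContinuousLinearMap.ext fun a => ?_
        show (ψ (star f)).fst a = (star (ψ f)).fst a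
        rw [DoubleCentralizer.star_fst, hfst, hsnd, ← hstar, StructureHomAux.smulC0_star,
          star_star]
      · refine ContinuousLinearMap.ext fun a => ?_
        show (ψ (star f)).snd a = (star (ψ f)).snd a
        rw [DoubleCentralizer.star_snd, hsnd, hfst, ← hstar, StructureHomAux.smulC0_star,
          star_star]
    · -- essentiality
      intro z hzcomm hz0
      have hfst0 : ∀ a : A, z.fst a = 0 := by
        intro a
        have hL0 : ∀ f : C₀(X, ℂ), m (smulC0 f (z.fst a)) = 0 := by
          intro f
          have := congrArg (fun T : 𝓜(ℂ, A) => T.fst a) (hz0 f)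
          rw [DoubleCentralizer.mul_fst] at this
          rw [← hfst f (z.fst a)]
          exact this
        -- every element of A right-annihilates z.fst a
        have hann : ∀ c : A, c * z.fst a = 0 := by
          intro c
          obtain ⟨Φ, rfl⟩ := hsurj c
          obtain ⟨f, Ψ, hfac⟩ := StructureHomAux.exists_scalar_factor Φ
          have : m (Ψ * smulC0 f (z.fst a)) = m Φ * z.fst a := by
            refine hbil_r Φ (Ψ * smulC0 f (z.fst a)) (z.fst a) fun x => ?_
            rw [ZeroAtInftyContinuousMap.mul_apply, StructureHomAux.smulC0_apply,
              hfac x, smul_mul_assoc, mul_smul_comm]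
          rw [← this, map_mul, hL0 f, mul_zero]
        exact StructureHomAux.cancel_l _ hann
      have hsnd0 : ∀ a : A, z.snd a = 0 := by
        intro a
        refine StructureHomAux.cancel_r _ fun b => ?_
        rw [z.central a b, hfst0 b, mul_zero]
      refine DoubleCentralizer.ext _ _ _ _ (Prod.ext ?_ ?_)
      · exact ContinuousLinearMap.ext fun a => by
          rw [hfst0 a]; rfl
      · exact ContinuousLinearMap.ext fun a => by
          rw [hsnd0 a]; rfl
end

section
/- Let D be a nonempty directed partially ordered set, let (X_d)_{d ∈ D} be compact Hausdorff topological spaces, and for all d ≤ d' in D let f_{d',d} : X_{d'} → X_d be continuous maps satisfying f_{d,d} = id and f_{d'',d} = f_{d',d} ∘ f_{d'',d'} whenever d ≤ d' ≤ d''. Let X := {x ∈ ∏_{d ∈ D} X_d : x_d = f_{d',d}(x_{d'}) for all d ≤ d'} with the subspace topology of the product, and let π_d : X → X_d be the projections. Then the union over d ∈ D of the sets {g ∘ π_d : g ∈ C(X_d, ℂ)} is dense in the Banach space C(X, ℂ) of continuous complex-valued functions on X with the supremum norm. -/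
/-- The inverse (cofiltered) limit of a system of spaces `X d` with transition maps
`f h : X d' → X d` for `h : d ≤ d'`, as a subset of the product `∀ d, X d`. -/
def invLimitSet {D : Type*} [PartialOrder D] (X : D → Type*)
    (f : ∀ ⦃d d'⦄, d ≤ d' → X d' → X d) : Set (∀ d, X d) :=
  {x | ∀ ⦃d d'⦄ (h : d ≤ d'), f h (x d') = x d}

set_option synthInstance.maxHeartbeats 1000000 in
set_option maxHeartbeats 1000000 in
/-- Let `D` be a nonempty directed poset, `(X d)` compact Hausdorff
spaces, and `f` a compatible system of continuous transition maps.  Let `X` be the inverse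
limit with projections `π_d`.  Then `⋃_d {g ∘ π_d : g ∈ C(X d, ℂ)}` is dense in `C(X, ℂ)`
for the supremum norm: every continuous `G : X → ℂ` is uniformly approximated by functions
of the form `g ∘ π_d`. -/
theorem dense_pullbacks_in_inverse_limit
    {D : Type*} [PartialOrder D] [Nonempty D] [IsDirected D (· ≤ ·)]
    (X : D → Type*) [∀ d, TopologicalSpace (X d)] [∀ d, CompactSpace (X d)]
    [∀ d, T2Space (X d)]
    (f : ∀ ⦃d d'⦄, d ≤ d' → X d' → X d)
    (hfc : ∀ (d d' : D) (h : d ≤ d'), Continuous (f h))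
    (hfid : ∀ (d : D) (x : X d), f (le_refl d) x = x)
    (hfcomp : ∀ (d d' d'' : D) (h : d ≤ d') (h' : d' ≤ d'') (x : X d''),
      f h (f h' x) = f (h.trans h') x) :
    ∀ G : C(invLimitSet X f, ℂ), ∀ ε : ℝ, 0 < ε →
      ∃ (d : D) (g : C(X d, ℂ)), ∀ x : invLimitSet X f,
        ‖G x - g ((x : ∀ d, X d) d)‖ ≤ ε := by
  -- the inverse limit is closed, hence compact
  have hclosed : IsClosed (invLimitSet X f) := by
    have : invLimitSet X f =
        ⋂ (d : D) (d' : D) (h : d ≤ d'), {x : ∀ d, X d | f h (x d') = x d} := by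
      ext x
      simp only [invLimitSet, Set.mem_setOf_eq, Set.mem_iInter]
    rw [this]
    exact isClosed_iInter fun d => isClosed_iInter fun d' => isClosed_iInter fun h =>
      isClosed_eq ((hfc _ _ h).comp (continuous_apply d')) (continuous_apply d)
  haveI : CompactSpace (invLimitSet X f) := isCompact_iff_compactSpace.mp hclosed.isCompact
  -- the subalgebra of pullbacks
  let A : StarSubalgebra ℂ C(invLimitSet X f, ℂ) :=
  { carrier := {F | ∃ (d : D) (g : C(X d, ℂ)), ∀ x : invLimitSet X f, F x = g ((x : ∀ d, X d) d)}
    mul_mem' := by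
      rintro F F' ⟨d, g, hg⟩ ⟨d', g', hg'⟩
      obtain ⟨e, h, h'⟩ := directed_of (· ≤ ·) d d'
      refine ⟨e, (g.comp ⟨f h, hfc _ _ h⟩) * (g'.comp ⟨f h', hfc _ _ h'⟩), fun x => ?_⟩
      have hx : f h ((x : ∀ d, X d) e) = (x : ∀ d, X d) d := x.2 h
      have hx' : f h' ((x : ∀ d, X d) e) = (x : ∀ d, X d) d' := x.2 h'
      simp [hg x, hg' x, hx, hx']
    add_mem' := by
      rintro F F' ⟨d, g, hg⟩ ⟨d', g', hg'⟩
      obtain ⟨e, h, h'⟩ := directed_of (· ≤ ·) d d'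
      refine ⟨e, (g.comp ⟨f h, hfc _ _ h⟩) + (g'.comp ⟨f h', hfc _ _ h'⟩), fun x => ?_⟩
      have hx : f h ((x : ∀ d, X d) e) = (x : ∀ d, X d) d := x.2 h
      have hx' : f h' ((x : ∀ d, X d) e) = (x : ∀ d, X d) d' := x.2 h'
      simp [hg x, hg' x, hx, hx']
    one_mem' := by
      obtain ⟨d⟩ := (inferInstance : Nonempty D)
      exact ⟨d, 1, fun x => rfl⟩
    zero_mem' := by
      obtain ⟨d⟩ := (inferInstance : Nonempty D)
      exact ⟨d, 0, fun x => rfl⟩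
    algebraMap_mem' := fun c => by
      obtain ⟨d⟩ := (inferInstance : Nonempty D)
      exact ⟨d, ContinuousMap.const _ c, fun x => rfl⟩
    star_mem' := by
      rintro F ⟨d, g, hg⟩
      exact ⟨d, star g, fun x => by simp [hg x]⟩ }
  -- A separates points
  have hA : A.SeparatesPoints := by
    intro x y hxy
    have : ∃ d : D, (x : ∀ d, X d) d ≠ (y : ∀ d, X d) d := by
      by_contra hc
      push_neg at hc
      exact hxy (Subtype.ext (funext hc))
    obtain ⟨d, hd⟩ := this
    obtain ⟨r, hr0, hr1, -⟩ := exists_continuous_zero_one_of_isClosed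
      (isClosed_singleton (x := (x : ∀ d, X d) d))
      (isClosed_singleton (x := (y : ∀ d, X d) d)) (by simpa using hd)
    let g : C(X d, ℂ) := (ContinuousMap.mk Complex.ofReal Complex.continuous_ofReal).comp r
    let F : C(invLimitSet X f, ℂ) :=
      g.comp ⟨fun z => (z : ∀ d, X d) d, (continuous_apply d).comp continuous_subtype_val⟩
    refine ⟨F, ⟨F, ⟨d, g, fun z => rfl⟩, rfl⟩, ?_⟩
    have h0 : r ((x : ∀ d, X d) d) = 0 := hr0 rfl
    have h1 : r ((y : ∀ d, X d) d) = 1 := hr1 rfl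
    simp [F, g, h0, h1]
  intro G ε hε
  have htop := ContinuousMap.starSubalgebra_topologicalClosure_eq_top_of_separatesPoints A hA
  have hGmem : G ∈ A.topologicalClosure := by rw [htop]; trivial
  have hGcl : G ∈ closure (A : Set C(invLimitSet X f, ℂ)) := hGmem
  obtain ⟨F, hFA, hFd⟩ := Metric.mem_closure_iff.mp hGcl ε hε
  obtain ⟨d, g, hg⟩ := hFA
  refine ⟨d, g, fun x => ?_⟩
  have := ContinuousMap.dist_apply_le_dist (f := G) (g := F) x
  rw [hg x] at this
  calc ‖G x - g ((x : ∀ d, X d) d)‖ = dist (G x) (g ((x : ∀ d, X d) d)) := by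
        rw [dist_eq_norm]
      _ ≤ dist G F := this
      _ ≤ ε := (hFd).le
end
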